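/- arXiv:1011.0355 — 10 statements merged into one kernel-verified Lean document; each statement's English description precedes it below -/
import Mathlib

section
/- For the homogeneous Firework Process, let a_n = ∏_{i=0}^{n} P(R < i+1) for n ∈ ℕ. Then ∑_{n=1}^{∞} a_n = ∞ if and only if P(V) = 0. -/
open MeasureTheory ProbabilityTheory Filter Set
open scoped ENNReal

/-!
Model the process on the coordinate space `ℕ → ℝ` with the product measure `ν = μ^ℕ`, `μ` the law
of `R`. Restart the process at `m` whenever it dies out at `m`. The events "it dies at `m` and the
process restarted at `m` survives" are pairwise disjoint and, by independence and shift invariance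
of `ν`, have probability `ν(dies at m) · P(V)`; hence `(∑ₘ ν(dies at m)) · P(V) ≤ 1`. Off their
union the process dies infinitely often, so if `P(V) = 0` a convergent series would contradict
Borel–Cantelli. Finally `ν(dies at n + 1) = a n`.
-/

namespace Firework

/-- `x i` plays the role of `R i`: the process started at `0` activates exactly `{0, …, n - 1}`. -/
def diesAt (n : ℕ) : Set (ℕ → ℝ) :=
  (Finset.range n : Set ℕ).pi fun i ↦ Iio ((n - i : ℕ) : ℝ)

def survives : Set (ℕ → ℝ) := ⋂ n ≥ 1, (diesAt n)ᶜ

def shift (m : ℕ) (x : ℕ → ℝ) : ℕ → ℝ := fun i ↦ x (m + i)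

/-- Restarting the process after each extinction, `m` is the last extinction. -/
def lastRestartAt (m : ℕ) : Set (ℕ → ℝ) := diesAt m ∩ shift m ⁻¹' survives

lemma mem_diesAt {n : ℕ} {x : ℕ → ℝ} : x ∈ diesAt n ↔ ∀ i < n, x i < ((n - i : ℕ) : ℝ) := by
  simp [diesAt]

lemma shift_mem_diesAt {m n : ℕ} {x : ℕ → ℝ} (hmn : m ≤ n) (hx : x ∈ diesAt n) :
    shift m x ∈ diesAt (n - m) := by
  rw [mem_diesAt] at hx ⊢
  intro i hi
  simpa [shift, show n - m - i = n - (m + i) by omega] using hx (m + i) (by omega)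

lemma mem_diesAt_add {m k : ℕ} {x : ℕ → ℝ} (hm : x ∈ diesAt m) (hk : shift m x ∈ diesAt k) :
    x ∈ diesAt (m + k) := by
  rw [mem_diesAt] at hm hk ⊢
  intro i hi
  rcases lt_or_ge i m with him | hmi
  · exact (hm i him).trans_le (by gcongr; omega)
  · simpa [shift, Nat.add_sub_cancel' hmi, show k - (i - m) = m + k - i by omega]
      using hk (i - m) (by omega)

lemma pairwise_disjoint_lastRestartAt : Pairwise (Function.onFun Disjoint lastRestartAt) := by
  suffices h : ∀ m n, m < n → Disjoint (lastRestartAt m) (lastRestartAt n) from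
    fun m n hmn ↦ (lt_or_gt_of_ne hmn).elim (h m n) fun h' ↦ (h n m h').symm
  refine fun m n hmn ↦ Set.disjoint_left.mpr fun x hm hn ↦ ?_
  have hsurv : shift m x ∈ survives := hm.2
  simp only [survives, mem_iInter] at hsurv
  exact hsurv (n - m) (by omega) (shift_mem_diesAt hmn.le hn.1)

lemma frequently_diesAt_of_notMem_iUnion {x : ℕ → ℝ} (hx : x ∉ ⋃ m, lastRestartAt m) :
    ∃ᶠ n in atTop, x ∈ diesAt n := by
  have next : ∀ n, x ∈ diesAt n → ∃ n' > n, x ∈ diesAt n' := by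
    intro n hn
    have : shift n x ∉ survives := fun h ↦ hx (mem_iUnion.mpr ⟨n, hn, h⟩)
    simp only [survives, mem_iInter, mem_compl_iff, not_forall, not_not] at this
    obtain ⟨k, hk, hdies⟩ := this
    exact ⟨n + k, by omega, mem_diesAt_add hn hdies⟩
  rw [frequently_atTop]
  intro N
  induction N with
  | zero => exact ⟨0, le_rfl, by simp [diesAt]⟩
  | succ N ih =>
    obtain ⟨n, hNn, hn⟩ := ih
    obtain ⟨n', hnn', hn'⟩ := next n hn
    exact ⟨n', by omega, hn'⟩

lemma measurableSet_diesAt (n : ℕ) : MeasurableSet (diesAt n) :=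
  .pi (Set.to_countable _) fun _ _ ↦ measurableSet_Iio

lemma measurableSet_survives : MeasurableSet survives :=
  .biInter (Set.to_countable _) fun n _ ↦ (measurableSet_diesAt n).compl

lemma measurable_shift (m : ℕ) : Measurable (shift m) :=
  measurable_pi_lambda _ fun i ↦ measurable_pi_apply (m + i)

variable (μ : Measure ℝ) [IsProbabilityMeasure μ]

local notation "ν" => Measure.infinitePi fun _ : ℕ ↦ μ

lemma measure_diesAt (n : ℕ) : ν (diesAt n) = ∏ i ∈ Finset.range n, μ (Iio ((i : ℝ) + 1)) := by
  rw [diesAt, Measure.infinitePi_pi _ fun _ _ ↦ measurableSet_Iio,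
    ← Finset.prod_range_reflect]
  refine Finset.prod_congr rfl fun i hi ↦ ?_
  rw [Finset.mem_range] at hi
  rw [show n - (n - 1 - i) = i + 1 by omega]
  push_cast
  rfl

lemma map_shift_infinitePi (m : ℕ) : (ν).map (shift m) = ν :=
  Measure.map_infinitePi_infinitePi_of_inj (add_right_injective m)

lemma measure_diesAt_inter_shift_preimage (m : ℕ) {A : Set (ℕ → ℝ)} (hA : MeasurableSet A) :
    ν (diesAt m ∩ shift m ⁻¹' A) = ν (diesAt m) * ν A := by
  let 𝓕 : ℕ → MeasurableSpace (ℕ → ℝ) := fun i ↦ .comap (fun x ↦ x i) inferInstance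
  have hindep : Indep (⨆ i ∈ {i | i < m}, 𝓕 i) (⨆ i ∈ {i | m ≤ i}, 𝓕 i) ν :=
    indep_iSup_of_disjoint (fun i ↦ (measurable_pi_apply i).comap_le)
      (iIndepFun_infinitePi (X := fun _ x ↦ x) fun _ ↦ measurable_id).iIndep
      (Set.disjoint_left.mpr fun i (hi : i < m) (hi' : m ≤ i) ↦ hi'.not_gt hi)
  have hpast : MeasurableSet[⨆ i ∈ {i | i < m}, 𝓕 i] (diesAt m) := by
    rw [show diesAt m = ⋂ i ∈ Finset.range m, (fun x ↦ x i) ⁻¹' Iio ((m - i : ℕ) : ℝ) by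
      ext; simp [diesAt]]
    exact .biInter (Set.to_countable _) fun i hi ↦
      le_iSup₂ (f := fun i (_ : i ∈ {i | i < m}) ↦ 𝓕 i) i (Finset.mem_range.mp hi) _
        ⟨_, measurableSet_Iio, rfl⟩
  have hfuture : MeasurableSpace.comap (shift m) inferInstance ≤ ⨆ i ∈ {i | m ≤ i}, 𝓕 i := by
    simp only [MeasurableSpace.pi, MeasurableSpace.comap_iSup, MeasurableSpace.comap_comp]
    exact iSup_le fun i ↦
      le_iSup₂ (f := fun i (_ : i ∈ {i | m ≤ i}) ↦ 𝓕 i) (m + i) (Nat.le_add_right m i)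
  rw [(Indep_iff _ _ _).mp hindep _ _ hpast (hfuture _ ⟨A, hA, rfl⟩),
    ← Measure.map_apply (measurable_shift m) hA, map_shift_infinitePi]

lemma measure_iUnion_lastRestartAt :
    ν (⋃ m, lastRestartAt m) = (∑' m, ν (diesAt m)) * ν survives := by
  rw [measure_iUnion pairwise_disjoint_lastRestartAt fun m ↦
      (measurableSet_diesAt m).inter (measurable_shift m measurableSet_survives),
    ← ENNReal.tsum_mul_right]
  exact tsum_congr fun m ↦ measure_diesAt_inter_shift_preimage μ m measurableSet_survives

theorem tsum_measure_diesAt_eq_top_iff : ∑' n, ν (diesAt n) = ∞ ↔ ν survives = 0 := by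
  constructor
  · intro hsum
    by_contra hsurv
    have := (measure_iUnion_lastRestartAt μ).symm.trans_le prob_le_one
    rw [hsum, ENNReal.top_mul hsurv] at this
    exact absurd this (by simp)
  · intro hsurv
    by_contra hsum
    have hrestart : ν (⋃ m, lastRestartAt m) = 0 := by
      rw [measure_iUnion_lastRestartAt, hsurv, mul_zero]
    have hdies : ν (limsup diesAt atTop) = 0 := measure_limsup_atTop_eq_zero hsum
    have hcover : univ ⊆ (⋃ m, lastRestartAt m) ∪ limsup diesAt atTop := fun x _ ↦
      or_iff_not_imp_left.mpr fun hx ↦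
        mem_limsup_iff_frequently_mem.mpr (frequently_diesAt_of_notMem_iUnion hx)
    have := measure_mono (μ := ν) hcover |>.trans (measure_union_le _ _)
    rw [measure_univ, hrestart, hdies, add_zero] at this
    exact absurd this (by simp)

theorem tsum_measure_diesAt_add_eq_top_iff (k : ℕ) :
    ∑' n, ν (diesAt (n + k)) = ∞ ↔ ν survives = 0 := by
  refine Iff.trans ?_ (tsum_measure_diesAt_eq_top_iff μ)
  rw [← ENNReal.summable.sum_add_tsum_nat_add' (f := fun n ↦ ν (diesAt n)), ENNReal.add_eq_top,
    iff_or_self]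
  exact fun h ↦ absurd h (ENNReal.sum_ne_top.mpr fun n _ ↦ measure_ne_top _ _)

end Firework

open Firework

theorem firework_homogeneous_criterion_general
    {Ω : Type*} [MeasurableSpace Ω] (P : Measure Ω) [IsProbabilityMeasure P]
    (R : ℕ → Ω → ℝ) (R₀ : Ω → ℝ)
    (hindep : iIndepFun R P)
    (hid : ∀ i, IdentDistrib (R i) R₀ P P)
    (V : Set Ω)
    (hV : V = ⋂ (n : ℕ) (_ : 1 ≤ n), ⋃ i ∈ Finset.range n,
      {ω | ((n - i : ℕ) : ℝ) ≤ R i ω})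
    (a : ℕ → ℝ≥0∞)
    (ha : ∀ n, a n = ∏ i ∈ Finset.range (n + 1), P {ω | R₀ ω < ((i : ℝ) + 1)}) :
    (∑' n : ℕ, a (n + 1)) = ⊤ ↔ P V = 0 := by
  have hR₀ : HasLaw R₀ (P.map R₀) P := ⟨(hid 0).aemeasurable_snd, rfl⟩
  have : IsProbabilityMeasure (P.map R₀) := Measure.isProbabilityMeasure_map hR₀.aemeasurable
  have hR : HasLaw (fun ω i ↦ R i ω) (Measure.infinitePi fun _ : ℕ ↦ P.map R₀) P :=
    hindep.hasLaw_infinitePi (fun i ↦ ⟨(hid i).aemeasurable_fst, (hid i).map_eq⟩)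
      (aemeasurable_pi_lambda _ fun i ↦ (hid i).aemeasurable_fst)
  have hPV : P V = Measure.infinitePi (fun _ : ℕ ↦ P.map R₀) survives := by
    have hV' : V = {ω | (fun i ↦ R i ω) ∈ survives} := by
      ext ω
      simp [hV, survives, diesAt]
    rw [hV']
    exact hR.measure_eq (p := (· ∈ survives)) measurableSet_survives
  have ha' : ∀ n, a (n + 1) = Measure.infinitePi (fun _ : ℕ ↦ P.map R₀) (diesAt (n + 2)) := by
    intro n
    rw [ha, measure_diesAt]
    exact Finset.prod_congr rfl fun i _ ↦ hR₀.measure_eq measurableSet_Iio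
  rw [tsum_congr ha', hPV]
  exact tsum_measure_diesAt_add_eq_top_iff _ 2

/-- **Homogeneous Firework Process.** With `a n = ∏_{i=0}^{n} P(R < i+1)`,
the sum `∑_{n=1}^∞ a n` diverges if and only if the survival probability is zero. -/
theorem firework_homogeneous_criterion
    {Ω : Type*} [MeasurableSpace Ω] (P : Measure Ω) [IsProbabilityMeasure P]
    (R : ℕ → Ω → ℝ) (R₀ : Ω → ℝ)
    (hmeas : ∀ i, Measurable (R i)) (hmeas₀ : Measurable R₀)
    (hnonneg : ∀ i ω, 0 ≤ R i ω)
    (hindep : iIndepFun R P)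
    (hid : ∀ i, IdentDistrib (R i) R₀ P P)
    (h0 : 0 < P {ω | R₀ ω < 1}) (h1 : P {ω | R₀ ω < 1} < 1)
    (V : Set Ω)
    (hV : V = ⋂ (n : ℕ) (_ : 1 ≤ n), ⋃ i ∈ Finset.range n,
      {ω | ((n - i : ℕ) : ℝ) ≤ R i ω})
    (a : ℕ → ℝ≥0∞)
    (ha : ∀ n, a n = ∏ i ∈ Finset.range (n + 1), P {ω | R₀ ω < ((i : ℝ) + 1)}) :
    (∑' n : ℕ, a (n + 1)) = ⊤ ↔ P V = 0 :=
  firework_homogeneous_criterion_general P R R₀ hindep hid V hV a ha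
end

section
/- For the homogeneous Firework Process, P(V) ≥ ∏_{j=0}^{∞} [ 1 − ∏_{i=0}^{j} P(R < i+1) ]. -/
/-!
Let `A m` be the event that some vertex `i ≤ m` reaches `m + 1`, i.e. `i + R i ≥ m + 1`; the
process survives iff all `A m` occur. The events `A m` are increasing in the `R i`, so a
Harris-type inequality gives `P (⋂ A m) ≥ ∏ P (A m)`, while independence and identical
distribution give `P (A m) = 1 - ∏_{i ≤ m} P (R < i + 1)`. The Harris step is an induction on the
number of vertices: if `G` and `E` are positively correlated events determined by `R 0, …, R (N-1)`,
then so are `G` and `E ∪ B` for any event `B` determined by the independent `R N`.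
-/

open MeasureTheory ProbabilityTheory Filter
open scoped ENNReal

theorem ENNReal.tprod_le_prod_of_le_one {ι : Type*} {x : ι → ℝ≥0∞} (hx : ∀ i, x i ≤ 1)
    (s : Finset ι) : ∏' i, x i ≤ ∏ i ∈ s, x i := by
  have hanti : Antitone fun s : Finset ι ↦ ∏ i ∈ s, x i := fun s t hst ↦
    Finset.prod_le_prod_of_subset_of_le_one' hst fun i _ _ ↦ hx i
  have hprod : HasProd x (⨅ s : Finset ι, ∏ i ∈ s, x i) := tendsto_atTop_iInf hanti
  rw [hprod.tprod_eq]
  exact iInf_le _ s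

theorem ProbabilityTheory.Indep.measureReal_mul_le_inter_union {Ω : Type*}
    {m m' mΩ : MeasurableSpace Ω} {P : Measure Ω} [IsProbabilityMeasure P]
    (hind : Indep m m' P) (hm : m ≤ mΩ) (hm' : m' ≤ mΩ) {G E B : Set Ω}
    (hG : MeasurableSet[m] G) (hE : MeasurableSet[m] E) (hB : MeasurableSet[m'] B)
    (hGE : P.real G * P.real E ≤ P.real (G ∩ E)) :
    P.real G * P.real (E ∪ B) ≤ P.real (G ∩ (E ∪ B)) := by
  have hprod : ∀ X, MeasurableSet[m] X → P.real (X ∩ B) = P.real X * P.real B := fun X hX ↦ by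
    simp only [measureReal_def, (Indep_iff _ _ _).mp hind X B hX hB, ENNReal.toReal_mul]
  have hunion : P.real (E ∪ B) = P.real E + P.real B - P.real E * P.real B := by
    rw [← hprod E hE, ← measureReal_union_add_inter (hm' B hB)]
    ring
  have hunion' : P.real (G ∩ (E ∪ B)) =
      P.real (G ∩ E) + P.real G * P.real B - P.real (G ∩ E) * P.real B := by
    rw [Set.inter_union_distrib_left]
    have h := measureReal_union_add_inter (μ := P) (s := G ∩ E) ((hm G hG).inter (hm' B hB))
    rw [← Set.inter_inter_distrib_left, ← Set.inter_assoc, hprod _ (hG.inter hE),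
      hprod G hG] at h
    linarith
  have hB1 : P.real B ≤ 1 := measureReal_le_one
  rw [hunion, hunion']
  -- the difference of the two sides is `(P G * P E - P (G ∩ E)) * (1 - P B)`
  nlinarith [measureReal_nonneg (μ := P) (s := G)]

namespace Firework

variable {Ω : Type*} {R : ℕ → Ω → ℝ}

def reachedBy (R : ℕ → Ω → ℝ) (N : ℕ) (t : ℝ) : Set Ω :=
  ⋃ i ∈ Finset.range N, {ω | t - i ≤ R i ω}

/-- The vertices `1, …, N` are all activated. -/
def aliveUpTo (R : ℕ → Ω → ℝ) (N : ℕ) : Set Ω :=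
  ⋂ m ∈ Finset.range N, reachedBy R (m + 1) (m + 1)

abbrev pastSigma (R : ℕ → Ω → ℝ) (N : ℕ) : MeasurableSpace Ω :=
  ⨆ i ∈ Set.Iio N, MeasurableSpace.comap (R i) inferInstance

theorem survival_eq_iInter_reachedBy :
    ⋂ (n : ℕ) (_ : 1 ≤ n), ⋃ i ∈ Finset.range n, {ω | ((n - i : ℕ) : ℝ) ≤ R i ω} =
      ⋂ m : ℕ, reachedBy R (m + 1) (m + 1) := by
  rw [Set.iInter_ge_eq_iInter_nat_add]
  refine Set.iInter_congr fun m ↦ Set.iUnion₂_congr fun i hi ↦ ?_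
  rw [Nat.cast_sub (Finset.mem_range.mp hi).le]
  push_cast
  rfl

theorem reachedBy_succ (N : ℕ) (t : ℝ) :
    reachedBy R (N + 1) t = reachedBy R N t ∪ {ω | t - N ≤ R N ω} := by
  rw [reachedBy, Finset.range_add_one, Finset.set_biUnion_insert, Set.union_comm]
  rfl

theorem reachedBy_anti (N : ℕ) {s t : ℝ} (hst : s ≤ t) : reachedBy R N t ⊆ reachedBy R N s :=
  Set.iUnion₂_mono fun i _ ω (hω : t - i ≤ R i ω) ↦ show s - i ≤ R i ω by linarith

theorem aliveUpTo_zero : aliveUpTo R 0 = Set.univ := by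
  simp [aliveUpTo]

theorem aliveUpTo_succ (N : ℕ) :
    aliveUpTo R (N + 1) = aliveUpTo R N ∩ reachedBy R (N + 1) (N + 1) := by
  rw [aliveUpTo, Finset.range_add_one, Finset.set_biInter_insert, Set.inter_comm]
  rfl

theorem pastSigma_mono : Monotone (pastSigma R) := fun _ _ hNM ↦
  iSup₂_mono' fun i hi ↦ ⟨i, lt_of_lt_of_le hi hNM, le_rfl⟩

theorem measurableSet_reachedBy (N : ℕ) (t : ℝ) :
    MeasurableSet[pastSigma R N] (reachedBy R N t) :=
  .biUnion (Finset.range N).countable_toSet fun i hi ↦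
    le_iSup₂ (f := fun i (_ : i ∈ Set.Iio N) ↦ MeasurableSpace.comap (R i) inferInstance)
      i (Finset.mem_range.mp hi) _ ⟨Set.Ici (t - i), measurableSet_Ici, rfl⟩

theorem measurableSet_aliveUpTo (N : ℕ) : MeasurableSet[pastSigma R N] (aliveUpTo R N) :=
  .biInter (Finset.range N).countable_toSet fun _ hm ↦
    pastSigma_mono (Finset.mem_range.mp hm) _ (measurableSet_reachedBy _ _)

variable [MeasurableSpace Ω] {P : Measure Ω}

theorem pastSigma_le (hmeas : ∀ i, Measurable (R i)) (N : ℕ) : pastSigma R N ≤ ‹_› :=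
  iSup₂_le fun i _ ↦ (hmeas i).comap_le

theorem indep_pastSigma (hmeas : ∀ i, Measurable (R i)) (hindep : iIndepFun R P) (N : ℕ) :
    Indep (pastSigma R N) (MeasurableSpace.comap (R N) inferInstance) P := by
  have h := indep_iSup_of_disjoint (fun i ↦ (hmeas i).comap_le)
    ((iIndepFun_iff_iIndep _ _ _).mp hindep)
    (S := Set.Iio N) (Set.disjoint_singleton_right.mpr (lt_irrefl N))
  rw [iSup_singleton] at h
  exact h

theorem measure_reachedBy_compl (hindep : iIndepFun R P) (N : ℕ) (t : ℝ) :
    P (reachedBy R N t)ᶜ = ∏ i ∈ Finset.range N, P {ω | R i ω < t - i} := by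
  simp only [reachedBy, Set.compl_iUnion, Set.compl_ofPred, not_le]
  exact hindep.meas_biInter fun i _ ↦ ⟨Set.Iio _, measurableSet_Iio, rfl⟩

variable [IsProbabilityMeasure P]

/-- Stated for every `t ≥ N + 1` rather than only `t = N + 1`, which is what makes the induction
go through. -/
theorem measureReal_aliveUpTo_mul_le (hmeas : ∀ i, Measurable (R i)) (hindep : iIndepFun R P)
    (N : ℕ) {t : ℝ} (ht : N + 1 ≤ t) :
    P.real (aliveUpTo R N) * P.real (reachedBy R (N + 1) t) ≤
      P.real (aliveUpTo R N ∩ reachedBy R (N + 1) t) := by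
  induction N generalizing t with
  | zero => simp [aliveUpTo_zero]
  | succ N ih =>
    have hsub : reachedBy R (N + 1) t ⊆ reachedBy R (N + 1) (N + 1) :=
      reachedBy_anti _ (by push_cast at ht; linarith)
    have hcorr : P.real (aliveUpTo R (N + 1)) * P.real (reachedBy R (N + 1) t) ≤
        P.real (aliveUpTo R (N + 1) ∩ reachedBy R (N + 1) t) :=
      calc _ ≤ P.real (aliveUpTo R N) * P.real (reachedBy R (N + 1) t) :=
            mul_le_mul_of_nonneg_right (measureReal_mono (by rw [aliveUpTo_succ]; exact
              Set.inter_subset_left)) measureReal_nonneg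
        _ ≤ P.real (aliveUpTo R N ∩ reachedBy R (N + 1) t) := ih (by push_cast at ht; linarith)
        _ = _ := by rw [aliveUpTo_succ, Set.inter_assoc, Set.inter_eq_right.mpr hsub]
    rw [reachedBy_succ (N + 1)]
    exact (indep_pastSigma hmeas hindep _).measureReal_mul_le_inter_union
      (pastSigma_le hmeas _) (hmeas _).comap_le (measurableSet_aliveUpTo _)
      (measurableSet_reachedBy _ _) ⟨Set.Ici _, measurableSet_Ici, rfl⟩ hcorr

theorem prod_measure_reachedBy_le (hmeas : ∀ i, Measurable (R i)) (hindep : iIndepFun R P)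
    (N : ℕ) : ∏ j ∈ Finset.range N, P (reachedBy R (j + 1) (j + 1)) ≤ P (aliveUpTo R N) := by
  rw [← ENNReal.toReal_le_toReal (ENNReal.prod_ne_top fun _ _ ↦ measure_ne_top _ _)
    (measure_ne_top _ _), ENNReal.toReal_prod]
  simp only [← measureReal_def]
  induction N with
  | zero => simp [aliveUpTo_zero]
  | succ N ih =>
    rw [Finset.prod_range_succ, aliveUpTo_succ]
    calc _ ≤ P.real (aliveUpTo R N) * P.real (reachedBy R (N + 1) (N + 1)) := by gcongr
      _ ≤ _ := measureReal_aliveUpTo_mul_le hmeas hindep N le_rfl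

theorem measure_reachedBy_succ_self (hmeas : ∀ i, Measurable (R i)) (hindep : iIndepFun R P)
    {R₀ : Ω → ℝ} (hid : ∀ i, IdentDistrib (R i) R₀ P P) (N : ℕ) :
    P (reachedBy R (N + 1) (N + 1)) =
      1 - ∏ i ∈ Finset.range (N + 1), P {ω | R₀ ω < (i : ℝ) + 1} := by
  have hE : MeasurableSet (reachedBy R (N + 1) (N + 1)) :=
    pastSigma_le hmeas _ _ (measurableSet_reachedBy _ _)
  rw [← compl_compl (reachedBy R _ _), prob_compl_eq_one_sub hE.compl,
    measure_reachedBy_compl hindep,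
    ← Finset.prod_range_reflect (fun i ↦ P {ω | R₀ ω < (i : ℝ) + 1})]
  refine congrArg (1 - ·) (Finset.prod_congr rfl fun i hi ↦ ?_)
  have hiN : i ≤ N := Nat.lt_succ_iff.mp (Finset.mem_range.mp hi)
  have hshift : ((N + 1 - 1 - i : ℕ) : ℝ) + 1 = N + 1 - i := by
    rw [Nat.add_sub_cancel, Nat.cast_sub hiN]
    ring
  rw [hshift]
  exact (hid i).measure_mem_eq measurableSet_Iio

theorem prod_le_measure_biInter_reachedBy (hmeas : ∀ i, Measurable (R i))
    (hindep : iIndepFun R P) {R₀ : Ω → ℝ} (hid : ∀ i, IdentDistrib (R i) R₀ P P) (n : ℕ) :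
    ∏ j ∈ Finset.range (n + 1), (1 - ∏ i ∈ Finset.range (j + 1), P {ω | R₀ ω < (i : ℝ) + 1}) ≤
      P (⋂ j ≤ n, reachedBy R (j + 1) (j + 1)) := by
  simp_rw [← measure_reachedBy_succ_self hmeas hindep hid]
  convert prod_measure_reachedBy_le hmeas hindep (n + 1) using 2
  simp only [aliveUpTo, Finset.mem_range, Nat.lt_succ_iff]

end Firework

theorem firework_homogeneous_lower_bound_general
    {Ω : Type*} [MeasurableSpace Ω] (P : Measure Ω) [IsProbabilityMeasure P]
    (R : ℕ → Ω → ℝ) (R₀ : Ω → ℝ)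
    (hmeas : ∀ i, Measurable (R i))
    (hindep : iIndepFun R P)
    (hid : ∀ i, IdentDistrib (R i) R₀ P P)
    (V : Set Ω)
    (hV : V = ⋂ (n : ℕ) (_ : 1 ≤ n), ⋃ i ∈ Finset.range n,
      {ω | ((n - i : ℕ) : ℝ) ≤ R i ω}) :
    P V ≥ ∏' j : ℕ, (1 - ∏ i ∈ Finset.range (j + 1), P {ω | R₀ ω < ((i : ℝ) + 1)}) := by
  have hA : ∀ m : ℕ, MeasurableSet (Firework.reachedBy R (m + 1) (m + 1)) := fun m ↦
    Firework.pastSigma_le hmeas _ _ (Firework.measurableSet_reachedBy _ _)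
  rw [ge_iff_le, hV, Firework.survival_eq_iInter_reachedBy,
    measure_iInter_eq_iInf_measure_iInter_le (fun m ↦ (hA m).nullMeasurableSet)
      ⟨0, measure_ne_top _ _⟩]
  exact le_iInf fun n ↦ (ENNReal.tprod_le_prod_of_le_one (fun _ ↦ tsub_le_self) _).trans
    (Firework.prod_le_measure_biInter_reachedBy hmeas hindep hid n)

/-- **Homogeneous Firework Process.**
`P(V) ≥ ∏_{j=0}^∞ [1 − ∏_{i=0}^{j} P(R < i+1)]`. -/
theorem firework_homogeneous_lower_bound
    {Ω : Type*} [MeasurableSpace Ω] (P : Measure Ω) [IsProbabilityMeasure P]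
    (R : ℕ → Ω → ℝ) (R₀ : Ω → ℝ)
    (hmeas : ∀ i, Measurable (R i)) (hmeas₀ : Measurable R₀)
    (hnonneg : ∀ i ω, 0 ≤ R i ω)
    (hindep : iIndepFun R P)
    (hid : ∀ i, IdentDistrib (R i) R₀ P P)
    (h0 : 0 < P {ω | R₀ ω < 1}) (h1 : P {ω | R₀ ω < 1} < 1)
    (V : Set Ω)
    (hV : V = ⋂ (n : ℕ) (_ : 1 ≤ n), ⋃ i ∈ Finset.range n,
      {ω | ((n - i : ℕ) : ℝ) ≤ R i ω}) :
    P V ≥ ∏' j : ℕ, (1 - ∏ i ∈ Finset.range (j + 1), P {ω | R₀ ω < ((i : ℝ) + 1)}) :=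
  firework_homogeneous_lower_bound_general P R R₀ hmeas hindep hid V hV
end

section
/- For the homogeneous Firework Process, suppose the sequence n·P(R ≥ n) converges to a limit L as n → ∞. If L > 1, then P(V) > 0. -/
open MeasureTheory ProbabilityTheory Filter Set
open scoped ENNReal

/-!
On the event `{R 0 ≥ M}` vertex `0` alone reaches every `n ≤ M`, so the process can only stop
at some `n > M`, and only if every `1 ≤ i < n` falls short of `n`; by independence this has
probability `P(R ≥ M) · ∏_{k=1}^{n-1} P(R < k)`. Eventually `n P(R ≥ n) ≥ a > 1`, hence
`P(R < n) ≤ 1 - a/n ≤ ((n-1)/n)^a` (Bernoulli), so these products are `O(n^{-a})` and summable.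
Taking `M` with `P(R ≥ M) > 0` and tail sum `t < 1` gives `P(V) ≥ (1 - t) P(R ≥ M) > 0`.
-/

lemma one_sub_div_mul_rpow_le {a x : ℝ} (ha : 1 ≤ a) (hx : 1 ≤ x) :
    (1 - a / x) * x ^ a ≤ (x - 1) ^ a := by
  have hx0 : 0 < x := by linarith
  have hbern := one_add_mul_self_le_rpow_one_add (s := -x⁻¹)
    (by rw [neg_le_neg_iff]; exact inv_le_one_of_one_le₀ hx) ha
  have hrw : 1 + -x⁻¹ = (x - 1) / x := by field_simp; ring
  rw [hrw, Real.div_rpow (by linarith) hx0.le, le_div_iff₀ (by positivity)] at hbern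
  rwa [show 1 - a / x = 1 + a * -x⁻¹ by ring]

lemma summable_prod_range_of_eventually_le_one_sub_div {f : ℕ → ℝ} {a : ℝ}
    (hf0 : ∀ k, 0 ≤ f k) (ha : 1 < a) (hf : ∀ᶠ n : ℕ in atTop, f n ≤ 1 - a / n) :
    Summable fun n => ∏ k ∈ Finset.range n, f (k + 1) := by
  set q : ℕ → ℝ := fun n => ∏ k ∈ Finset.range n, f (k + 1)
  have hq0 : ∀ n, 0 ≤ q n := fun n => Finset.prod_nonneg fun k _ => hf0 _
  obtain ⟨n₀, hn₀⟩ := eventually_atTop.1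
    ((tendsto_add_atTop_nat 1).eventually hf |>.and (eventually_ge_atTop 1))
  have hdecay : ∀ n, n₀ ≤ n → q n * (n : ℝ) ^ a ≤ q n₀ * (n₀ : ℝ) ^ a := by
    intro n hn
    induction n, hn using Nat.le_induction with
    | base => exact le_rfl
    | succ n hn ih =>
      have hfn : f (n + 1) ≤ 1 - a / ((n : ℝ) + 1) := by exact_mod_cast (hn₀ n hn).1
      calc q (n + 1) * ((n + 1 : ℕ) : ℝ) ^ a
          = q n * (f (n + 1) * ((n : ℝ) + 1) ^ a) := by
            simp only [q, Finset.prod_range_succ]; push_cast; ring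
        _ ≤ q n * ((1 - a / ((n : ℝ) + 1)) * ((n : ℝ) + 1) ^ a) :=
            mul_le_mul_of_nonneg_left (mul_le_mul_of_nonneg_right hfn (by positivity)) (hq0 n)
        _ ≤ q n * (n : ℝ) ^ a := by
            refine mul_le_mul_of_nonneg_left ?_ (hq0 n)
            simpa using one_sub_div_mul_rpow_le ha.le (by linarith : (1 : ℝ) ≤ n + 1)
        _ ≤ q n₀ * (n₀ : ℝ) ^ a := ih
  refine ((Real.summable_nat_rpow.2 (neg_lt_neg ha)).mul_left (q n₀ * (n₀ : ℝ) ^ a))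
    |>.of_norm_bounded_eventually_nat ?_
  filter_upwards [eventually_ge_atTop n₀] with n hn
  have hnpos : (0 : ℝ) < n := by exact_mod_cast (hn₀ n hn).2
  rw [Real.norm_of_nonneg (hq0 n), Real.rpow_neg hnpos.le, ← div_eq_mul_inv,
    le_div_iff₀ (by positivity)]
  exact hdecay n hn

lemma tsum_prod_range_measure_lt_ne_top {Ω : Type*} [MeasurableSpace Ω] {P : Measure Ω}
    [IsProbabilityMeasure P] {X : Ω → ℝ} (hX : AEMeasurable X P) {L : ℝ}
    (hL : Tendsto (fun n : ℕ => (n : ℝ) * (P {ω | (n : ℝ) ≤ X ω}).toReal) atTop (nhds L))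
    (hL1 : 1 < L) :
    ∑' n, ∏ k ∈ Finset.range n, P {ω | X ω < (k + 1 : ℕ)} ≠ ∞ := by
  set f : ℕ → ℝ := fun k => (P {ω | X ω < k}).toReal
  have hf : ∀ k : ℕ, f k = 1 - (P {ω | (k : ℝ) ≤ X ω}).toReal := fun k => by
    rw [← ENNReal.toReal_one, ← ENNReal.toReal_sub_of_le prob_le_one ENNReal.one_ne_top,
      ← prob_compl_eq_one_sub₀ (s := {ω | (k : ℝ) ≤ X ω}) (hX.nullMeasurable measurableSet_Ici)]
    simp only [f, compl_ofPred, not_le]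
  have hdecay : ∀ᶠ n : ℕ in atTop, f n ≤ 1 - (1 + L) / 2 / n := by
    filter_upwards [hL.eventually (lt_mem_nhds (by linarith : (1 + L) / 2 < L)),
      eventually_gt_atTop 0] with n hn hn0
    rw [hf, sub_le_sub_iff_left, div_le_iff₀ (by exact_mod_cast hn0), mul_comm]
    exact hn.le
  have hsum := summable_prod_range_of_eventually_le_one_sub_div
    (fun k => ENNReal.toReal_nonneg) (by linarith) hdecay
  have hq : ∀ n, ∏ k ∈ Finset.range n, P {ω | X ω < (k + 1 : ℕ)}
      = ENNReal.ofReal (∏ k ∈ Finset.range n, f (k + 1)) := fun n => by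
    rw [ENNReal.ofReal_prod_of_nonneg fun k _ => ENNReal.toReal_nonneg]
    exact Finset.prod_congr rfl fun k _ => (ENNReal.ofReal_toReal (measure_ne_top _ _)).symm
  rw [funext hq, ← ENNReal.ofReal_tsum_of_nonneg
    (fun n => Finset.prod_nonneg fun k _ => ENNReal.toReal_nonneg) hsum]
  exact ENNReal.ofReal_ne_top

def reachedFromBelow {Ω : Type*} (R : ℕ → Ω → ℝ) (n : ℕ) : Set Ω :=
  ⋃ i ∈ Finset.range n, {ω | ((n - i : ℕ) : ℝ) ≤ R i ω}

section Firework

variable {Ω : Type*} [MeasurableSpace Ω] {P : Measure Ω} {R : ℕ → Ω → ℝ} {R₀ : Ω → ℝ}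

lemma measure_ge_inter_compl_reachedFromBelow_le (hindep : iIndepFun R P)
    (hid : ∀ i, IdentDistrib (R i) R₀ P P) (M n : ℕ) :
    P ({ω | (M : ℝ) ≤ R 0 ω} ∩ (reachedFromBelow R (n + 1))ᶜ)
      ≤ P {ω | (M : ℝ) ≤ R₀ ω} * ∏ k ∈ Finset.range n, P {ω | R₀ ω < (k + 1 : ℕ)} := by
  set t : ℕ → Set ℝ := fun i => if i = 0 then Ici (M : ℝ) else Iio ((n + 1 - i : ℕ) : ℝ)
  have hsub : {ω | (M : ℝ) ≤ R 0 ω} ∩ (reachedFromBelow R (n + 1))ᶜ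
      ⊆ ⋂ i ∈ Finset.range (n + 1), R i ⁻¹' t i := by
    rintro ω ⟨hM, hreach⟩
    simp only [reachedFromBelow, mem_compl_iff, mem_iUnion, mem_ofPred_eq, not_exists,
      not_le] at hreach
    simp only [mem_iInter, mem_preimage]
    intro i hi
    rcases i with _ | i
    · exact hM
    · exact hreach (i + 1) hi
  have ht : ∀ i ∈ Finset.range (n + 1), MeasurableSet (t i) := fun i _ => by
    by_cases hi : i = 0 <;> simp [t, hi]
  calc _ ≤ P (⋂ i ∈ Finset.range (n + 1), R i ⁻¹' t i) := measure_mono hsub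
    _ = (∏ i ∈ Finset.range n, P (R (i + 1) ⁻¹' t (i + 1))) * P (R 0 ⁻¹' t 0) := by
      rw [hindep.measure_inter_preimage_eq_mul _ ht, Finset.prod_range_succ']
    _ = _ := by
      rw [mul_comm]
      congr 1
      · exact (hid 0).measure_mem_eq measurableSet_Ici
      rw [← Finset.prod_range_reflect (fun k => P {ω | R₀ ω < (k + 1 : ℕ)})]
      refine Finset.prod_congr rfl fun i hi => ?_
      rw [Finset.mem_range] at hi
      simp only [t, Nat.add_eq_zero_iff, one_ne_zero, and_false, if_false,
        (hid (i + 1)).measure_mem_eq measurableSet_Iio]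
      rw [show n + 1 - (i + 1) = n - 1 - i + 1 by omega]
      rfl

lemma measure_ge_le_measure_survival_add (hindep : iIndepFun R P)
    (hid : ∀ i, IdentDistrib (R i) R₀ P P) (M : ℕ) :
    P {ω | (M : ℝ) ≤ R₀ ω} ≤ P (⋂ (n : ℕ) (_ : 1 ≤ n), reachedFromBelow R n)
      + P {ω | (M : ℝ) ≤ R₀ ω}
        * ∑' m, ∏ k ∈ Finset.range (m + M), P {ω | R₀ ω < (k + 1 : ℕ)} := by
  set E := {ω | (M : ℝ) ≤ R 0 ω}
  set V := ⋂ (n : ℕ) (_ : 1 ≤ n), reachedFromBelow R n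
  have hsub : E \ V ⊆ ⋃ m, E ∩ (reachedFromBelow R (m + M + 1))ᶜ := by
    rintro ω ⟨hE, hV⟩
    simp only [V, mem_iInter, not_forall] at hV
    obtain ⟨n, hn, hreach⟩ := hV
    obtain ⟨m, rfl⟩ : ∃ m, n = m + M + 1 := by
      refine ⟨n - M - 1, ?_⟩
      by_contra hnM
      have hnM' : ((n - 0 : ℕ) : ℝ) ≤ M := by exact_mod_cast (by omega : n - 0 ≤ M)
      exact hreach (mem_biUnion (x := 0) (Finset.mem_range.2 hn) (hnM'.trans hE))
    exact mem_iUnion.2 ⟨m, hE, hreach⟩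
  calc P {ω | (M : ℝ) ≤ R₀ ω} = P E := ((hid 0).measure_mem_eq measurableSet_Ici).symm
    _ ≤ P (E ∩ V) + P (E \ V) := measure_le_inter_add_sdiff P E V
    _ ≤ P V + ∑' m, P (E ∩ (reachedFromBelow R (m + M + 1))ᶜ) :=
      add_le_add (measure_mono inter_subset_right) ((measure_mono hsub).trans (measure_iUnion_le _))
    _ ≤ _ := by
      rw [← ENNReal.tsum_mul_left]
      gcongr with m
      exact measure_ge_inter_compl_reachedFromBelow_le hindep hid M (m + M)

end Firework

theorem firework_homogeneous_survival_of_limit_gt_one_general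
    {Ω : Type*} [MeasurableSpace Ω] (P : Measure Ω) [IsProbabilityMeasure P]
    (R : ℕ → Ω → ℝ) (R₀ : Ω → ℝ)
    (hindep : iIndepFun R P)
    (hid : ∀ i, IdentDistrib (R i) R₀ P P)
    (V : Set Ω)
    (hV : V = ⋂ (n : ℕ) (_ : 1 ≤ n), ⋃ i ∈ Finset.range n,
      {ω | ((n - i : ℕ) : ℝ) ≤ R i ω})
    (L : ℝ)
    (hL : Tendsto (fun n : ℕ => (n : ℝ) * (P {ω | (n : ℝ) ≤ R₀ ω}).toReal)
      atTop (nhds L))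
    (hL1 : 1 < L) :
    0 < P V := by
  have htail := ENNReal.tendsto_sum_nat_add _
    (tsum_prod_range_measure_lt_ne_top (hid 0).aemeasurable_snd hL hL1)
  have hpos : ∀ᶠ M : ℕ in atTop, 0 < (P {ω | (M : ℝ) ≤ R₀ ω}).toReal := by
    filter_upwards [hL.eventually (lt_mem_nhds (zero_lt_one.trans hL1))] with M hM
    exact pos_of_mul_pos_right hM (Nat.cast_nonneg M)
  obtain ⟨M, htailM, hposM⟩ :=
    ((htail.eventually (gt_mem_nhds zero_lt_one)).and hpos).exists
  have hE := measure_ge_le_measure_survival_add hindep hid M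
  obtain ⟨hEpos, hEfin⟩ := ENNReal.toReal_pos_iff.1 hposM
  have hV' : V = ⋂ (n : ℕ) (_ : 1 ≤ n), reachedFromBelow R n := hV
  rw [hV', pos_iff_ne_zero]
  intro hV0
  rw [hV0, zero_add] at hE
  exact (hE.trans_lt ((ENNReal.mul_lt_mul_right hEpos.ne' hEfin.ne htailM).trans_eq
    (mul_one _))).false

/-- **Homogeneous Firework Process.** If `n·P(R ≥ n) → L` with `L > 1`, then `P(V) > 0`. -/
theorem firework_homogeneous_survival_of_limit_gt_one
    {Ω : Type*} [MeasurableSpace Ω] (P : Measure Ω) [IsProbabilityMeasure P]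
    (R : ℕ → Ω → ℝ) (R₀ : Ω → ℝ)
    (hmeas : ∀ i, Measurable (R i)) (hmeas₀ : Measurable R₀)
    (hnonneg : ∀ i ω, 0 ≤ R i ω)
    (hindep : iIndepFun R P)
    (hid : ∀ i, IdentDistrib (R i) R₀ P P)
    (h0 : 0 < P {ω | R₀ ω < 1}) (h1 : P {ω | R₀ ω < 1} < 1)
    (V : Set Ω)
    (hV : V = ⋂ (n : ℕ) (_ : 1 ≤ n), ⋃ i ∈ Finset.range n,
      {ω | ((n - i : ℕ) : ℝ) ≤ R i ω})
    (L : ℝ)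
    (hL : Tendsto (fun n : ℕ => (n : ℝ) * (P {ω | (n : ℝ) ≤ R₀ ω}).toReal)
      atTop (nhds L))
    (hL1 : 1 < L) :
    0 < P V :=
  firework_homogeneous_survival_of_limit_gt_one_general P R R₀ hindep hid V hV L hL hL1
end

section
/- For the homogeneous Firework Process, suppose the sequence n·P(R ≥ n) converges to a limit L as n → ∞. If L < 1, then P(V) = 0. -/
/-!
Call `k` a cut if no vertex `i ≤ k` reaches `k + 1`; the process survives iff no cut occurs.
By independence a cut after `k` has probability `u (k + 1)`, where `u n = ∏_{j=1}^{n} P(R < j)`,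
and splitting according to the first cut `k ≤ m` gives the renewal equation
`P(cut after m) = ∑_{k ≤ m} P(first cut after k) · u (m - k)`: given the first cut, the cut
after `m` only depends on the vertices `k + 1, …, m`. Summing over `m < M` yields
`P(survival) · ∑_{n < M} u n ≤ 1`. If `n P(R ≥ n) → L < 1`, then eventually
`P(R < k + 1) ≥ k / (k + 1)`, so `n · u n` is eventually nondecreasing, `u n ≳ 1 / n`, and
`∑ u n = ∞`; hence `P(survival) = 0`.
-/

open MeasureTheory ProbabilityTheory Filter
open scoped ENNReal

lemma not_summable_prod_range_of_div_succ_le {x : ℕ → ℝ} (hpos : ∀ k, 0 < x k)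
    (h : ∀ᶠ k : ℕ in atTop, (k : ℝ) / (k + 1) ≤ x k) :
    ¬ Summable fun n => ∏ k ∈ Finset.range n, x k := by
  obtain ⟨K, hK⟩ := (h.and (eventually_ge_atTop 1)).exists_forall_of_atTop
  set v : ℕ → ℝ := fun n => n * ∏ k ∈ Finset.range n, x k
  have hv_succ : ∀ n ≥ K, v n ≤ v (n + 1) := fun n hn => by
    have hprod : 0 ≤ ∏ k ∈ Finset.range n, x k := Finset.prod_nonneg fun k _ => (hpos k).le
    have := mul_le_mul_of_nonneg_left ((div_le_iff₀ (by positivity)).mp (hK n hn).1) hprod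
    simp only [v, Finset.prod_range_succ, Nat.cast_succ]
    nlinarith
  have hvK : 0 < v K := mul_pos (by exact_mod_cast (hK K le_rfl).2)
    (Finset.prod_pos fun k _ => hpos k)
  intro hsum
  refine Real.not_summable_one_div_natCast
    ((hsum.div_const (v K)).of_norm_bounded_eventually_nat ?_)
  filter_upwards [eventually_ge_atTop K] with n hn
  have hvn : v K ≤ v n := Nat.le_induction le_rfl (fun m hm ih => ih.trans (hv_succ m hm)) n hn
  have hn0 : (0 : ℝ) < n := by exact_mod_cast (hK K le_rfl).2.trans hn
  rw [Real.norm_of_nonneg (by positivity), div_le_div_iff₀ hn0 hvK]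
  simpa [v, mul_comm] using hvn

namespace Firework

section Events

variable {Ω : Type*} {R : ℕ → Ω → ℝ}

def notReached (R : ℕ → Ω → ℝ) (a b : ℕ) : Set Ω :=
  ⋂ i ∈ Finset.Ico a b, {ω | R i ω < ((b - i : ℕ) : ℝ)}

def cutAfter (R : ℕ → Ω → ℝ) (k : ℕ) : Set Ω :=
  notReached R 0 (k + 1)

lemma notReached_inter_notReached {a b c : ℕ} (hab : a ≤ b) (hbc : b ≤ c) :
    notReached R a b ∩ notReached R a c = notReached R a b ∩ notReached R b c := by
  ext ω
  simp only [notReached, Set.mem_inter_iff, Set.mem_iInter, Finset.mem_Ico, Set.mem_ofPred_eq]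
  constructor
  · rintro ⟨hab', hac⟩
    exact ⟨hab', fun i hi => hac i ⟨hab.trans hi.1, hi.2⟩⟩
  · rintro ⟨hab', hbc'⟩
    refine ⟨hab', fun i hi => ?_⟩
    rcases lt_or_ge i b with hib | hib
    · exact (hab' i ⟨hi.1, hib⟩).trans_le (by gcongr)
    · exact hbc' i ⟨hib, hi.2⟩

lemma disjointed_cutAfter_inter_cutAfter {k m : ℕ} (hkm : k ≤ m) :
    disjointed (cutAfter R) k ∩ cutAfter R m =
      disjointed (cutAfter R) k ∩ notReached R (k + 1) (m + 1) := by
  have hsub : disjointed (cutAfter R) k ⊆ notReached R 0 (k + 1) := disjointed_subset _ k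
  rw [← Set.inter_eq_left.2 hsub, Set.inter_assoc, Set.inter_assoc, cutAfter,
    notReached_inter_notReached (Nat.zero_le _) (by omega)]

lemma cutAfter_eq_biUnion_disjointed_inter (m : ℕ) :
    cutAfter R m = ⋃ k ∈ Finset.range (m + 1), disjointed (cutAfter R) k ∩ cutAfter R m := by
  rw [← Set.iUnion₂_inter, biUnion_range_succ_disjointed]
  exact (Set.inter_eq_right.2 (le_partialSups (cutAfter R) m)).symm

lemma measurableSet_iSup_comap_notReached {S : Set ℕ} {a b : ℕ} (h : ∀ i, a ≤ i → i < b → i ∈ S) :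
    MeasurableSet[⨆ i ∈ S, MeasurableSpace.comap (R i) inferInstance] (notReached R a b) :=
  .biInter (Finset.Ico a b).countable_toSet fun i hi => by
    obtain ⟨hai, hib⟩ := Finset.mem_Ico.1 hi
    exact le_iSup₂ (f := fun i (_ : i ∈ S) => MeasurableSpace.comap (R i) inferInstance) i
      (h i hai hib) _ ⟨Set.Iio _, measurableSet_Iio, rfl⟩

lemma measurableSet_iSup_comap_disjointed_cutAfter (k : ℕ) :
    MeasurableSet[⨆ i ∈ Set.Iio (k + 1), MeasurableSpace.comap (R i) inferInstance]
      (disjointed (cutAfter R) k) := by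
  have hcut : ∀ j ≤ k, MeasurableSet[⨆ i ∈ Set.Iio (k + 1),
      MeasurableSpace.comap (R i) inferInstance] (cutAfter R j) := fun j hj =>
    measurableSet_iSup_comap_notReached fun i _ hi => by simp only [Set.mem_Iio]; omega
  rw [disjointed_eq_inter_compl]
  exact (hcut k le_rfl).inter (.iInter fun j => .iInter fun hj => (hcut j hj.le).compl)

end Events

section Measure

variable {Ω : Type*} [MeasurableSpace Ω] {P : Measure Ω} {R : ℕ → Ω → ℝ} {R₀ : Ω → ℝ}

noncomputable def gapProb (P : Measure Ω) (R₀ : Ω → ℝ) (n : ℕ) : ℝ≥0∞ :=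
  ∏ k ∈ Finset.range n, P {ω | R₀ ω < ((k + 1 : ℕ) : ℝ)}

lemma measure_notReached (hindep : iIndepFun R P) (hid : ∀ i, IdentDistrib (R i) R₀ P P)
    (a b : ℕ) : P (notReached R a b) = gapProb P R₀ (b - a) := by
  calc P (notReached R a b) = ∏ i ∈ Finset.Ico a b, P {ω | R₀ ω < ((b - i : ℕ) : ℝ)} := by
        rw [notReached, hindep.meas_biInter (s := fun i => {ω | R i ω < ((b - i : ℕ) : ℝ)})
          fun i _ => ⟨Set.Iio _, measurableSet_Iio, rfl⟩]
        exact Finset.prod_congr rfl fun i _ => (hid i).measure_mem_eq measurableSet_Iio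
    _ = gapProb P R₀ (b - a) := by
        rw [Finset.prod_Ico_reflect (fun j => P {ω | R₀ ω < (j : ℝ)}) a (Nat.le_succ b),
          Finset.prod_Ico_eq_prod_range, gapProb]
        exact Finset.prod_congr (by congr 1; omega) fun k _ => by
          rw [add_comm, Nat.add_sub_cancel_left]

lemma measurableSet_notReached (hmeas : ∀ i, Measurable (R i)) (a b : ℕ) :
    MeasurableSet (notReached R a b) :=
  .biInter (Finset.Ico a b).countable_toSet fun i _ => measurableSet_lt (hmeas i) measurable_const

lemma measurableSet_cutAfter (hmeas : ∀ i, Measurable (R i)) (k : ℕ) :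
    MeasurableSet (cutAfter R k) :=
  measurableSet_notReached hmeas 0 (k + 1)

lemma measure_inter_notReached (hmeas : ∀ i, Measurable (R i)) (hindep : iIndepFun R P)
    {s : Set Ω} {a : ℕ}
    (hs : MeasurableSet[⨆ i ∈ Set.Iio a, MeasurableSpace.comap (R i) inferInstance] s) (b : ℕ) :
    P (s ∩ notReached R a b) = P s * P (notReached R a b) :=
  (Indep_iff _ _ P).1 (indep_iSup_of_disjoint (fun i => (hmeas i).comap_le) hindep.iIndep
    (Set.Iio_disjoint_Ici le_rfl)) s _ hs (measurableSet_iSup_comap_notReached fun _ hi _ => hi)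

section Renewal

variable (hmeas : ∀ i, Measurable (R i)) (hindep : iIndepFun R P)
  (hid : ∀ i, IdentDistrib (R i) R₀ P P)
include hmeas hindep hid

lemma measure_cutAfter_eq_sum (m : ℕ) :
    P (cutAfter R m) =
      ∑ k ∈ Finset.range (m + 1), P (disjointed (cutAfter R) k) * gapProb P R₀ (m - k) := by
  rw [cutAfter_eq_biUnion_disjointed_inter m, measure_biUnion_finset]
  · refine Finset.sum_congr rfl fun k hk => ?_
    rw [disjointed_cutAfter_inter_cutAfter (Nat.lt_succ_iff.1 (Finset.mem_range.1 hk)),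
      measure_inter_notReached hmeas hindep (measurableSet_iSup_comap_disjointed_cutAfter k),
      measure_notReached hindep hid, Nat.add_sub_add_right]
  · exact fun k _ l _ hkl => ((disjoint_disjointed _ hkl).mono Set.inter_subset_left
      Set.inter_subset_left)
  · exact fun k _ => (MeasurableSet.disjointed (measurableSet_cutAfter hmeas) k).inter
      (measurableSet_notReached hmeas _ _)

lemma sum_measure_cutAfter_le (M : ℕ) :
    ∑ m ∈ Finset.range M, P (cutAfter R m) ≤
      P (⋃ k, cutAfter R k) * ∑ j ∈ Finset.range M, gapProb P R₀ j := by
  simp_rw [measure_cutAfter_eq_sum hmeas hindep hid]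
  rw [Finset.sum_range_diag_flip M fun k j => P (disjointed (cutAfter R) k) * gapProb P R₀ j,
    ← iUnion_disjointed,
    measure_iUnion (disjoint_disjointed _) (.disjointed (measurableSet_cutAfter hmeas))]
  calc ∑ k ∈ Finset.range M, ∑ j ∈ Finset.range (M - k),
        P (disjointed (cutAfter R) k) * gapProb P R₀ j
      ≤ ∑ k ∈ Finset.range M,
          P (disjointed (cutAfter R) k) * ∑ j ∈ Finset.range M, gapProb P R₀ j :=
        Finset.sum_le_sum fun k _ => by
          rw [Finset.mul_sum]
          exact Finset.sum_le_sum_of_subset (Finset.range_subset_range.2 (Nat.sub_le M k))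
    _ ≤ _ := by rw [← Finset.sum_mul]; gcongr; exact ENNReal.sum_le_tsum _

variable [IsProbabilityMeasure P]

lemma measure_survival_mul_sum_gapProb_le_one (M : ℕ) :
    P (⋂ k, (cutAfter R k)ᶜ) * ∑ j ∈ Finset.range M, gapProb P R₀ j ≤ 1 := by
  set T := ∑ j ∈ Finset.range M, gapProb P R₀ j
  have hT : T ≠ ∞ := ENNReal.sum_ne_top.2 fun j _ =>
    ((Finset.prod_le_one' fun _ _ => prob_le_one).trans_lt ENNReal.one_lt_top).ne
  have hrenewal : T ≤ P (⋃ k, cutAfter R k) * T + 1 := calc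
    T ≤ ∑ j ∈ Finset.range (M + 1), gapProb P R₀ j :=
        Finset.sum_le_sum_of_subset (Finset.range_subset_range.2 (Nat.le_succ M))
    _ = ∑ m ∈ Finset.range M, P (cutAfter R m) + 1 := by
        rw [Finset.sum_range_succ']
        simp [cutAfter, measure_notReached hindep hid, gapProb]
    _ ≤ _ := by gcongr; exact sum_measure_cutAfter_le hmeas hindep hid M
  rw [← Set.compl_iUnion, prob_compl_eq_one_sub (.iUnion (measurableSet_cutAfter hmeas)),
    ENNReal.sub_mul fun _ _ => hT, one_mul, tsub_le_iff_left]
  exact hrenewal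

lemma measure_survival_eq_zero (htop : ∑' n, gapProb P R₀ n = ∞) :
    P (⋂ k, (cutAfter R k)ᶜ) = 0 := by
  have h : P (⋂ k, (cutAfter R k)ᶜ) * ∑' n, gapProb P R₀ n ≤ 1 := by
    rw [ENNReal.tsum_eq_iSup_nat, ENNReal.mul_iSup]
    exact iSup_le (measure_survival_mul_sum_gapProb_le_one hmeas hindep hid)
  by_contra hne
  rw [htop, ENNReal.mul_top hne] at h
  simp at h

end Renewal

lemma tsum_gapProb_eq_top [IsProbabilityMeasure P] (hmeas₀ : Measurable R₀)
    (h0 : 0 < P {ω | R₀ ω < 1}) {L : ℝ}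
    (hL : Tendsto (fun n : ℕ => (n : ℝ) * (P {ω | (n : ℝ) ≤ R₀ ω}).toReal) atTop (nhds L))
    (hL1 : L < 1) :
    ∑' n, gapProb P R₀ n = ∞ := by
  set x : ℕ → ℝ := fun k => (P {ω | R₀ ω < ((k + 1 : ℕ) : ℝ)}).toReal
  have hx : ∀ k, x k = 1 - (P {ω | ((k + 1 : ℕ) : ℝ) ≤ R₀ ω}).toReal := fun k => by
    have hcompl : {ω | R₀ ω < ((k + 1 : ℕ) : ℝ)} = {ω | ((k + 1 : ℕ) : ℝ) ≤ R₀ ω}ᶜ := by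
      ext; simp
    show (P {ω | R₀ ω < ((k + 1 : ℕ) : ℝ)}).toReal = _
    rw [hcompl, prob_compl_eq_one_sub (measurableSet_le measurable_const hmeas₀),
      ENNReal.toReal_sub_of_le prob_le_one ENNReal.one_ne_top, ENNReal.toReal_one]
  have hpos : ∀ k, 0 < x k := fun k => ENNReal.toReal_pos
    (h0.trans_le (measure_mono fun ω (hω : R₀ ω < 1) => by
      simp only [Set.mem_ofPred_eq]; push_cast; linarith [(k.cast_nonneg : (0 : ℝ) ≤ k)])).ne'
    (measure_ne_top _ _)
  have hlarge : ∀ᶠ k : ℕ in atTop, (k : ℝ) / (k + 1) ≤ x k := by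
    filter_upwards [(tendsto_add_atTop_nat 1).eventually (hL.eventually (gt_mem_nhds hL1))]
      with k hk
    rw [hx, div_le_iff₀ (by positivity)]
    push_cast at hk ⊢
    linarith
  by_contra htop
  refine not_summable_prod_range_of_div_succ_le hpos hlarge ?_
  simpa only [gapProb, ENNReal.toReal_prod] using ENNReal.summable_toReal htop

end Measure

end Firework

theorem firework_homogeneous_death_of_limit_lt_one_general
    {Ω : Type*} [MeasurableSpace Ω] (P : Measure Ω) [IsProbabilityMeasure P]
    (R : ℕ → Ω → ℝ) (R₀ : Ω → ℝ)
    (hmeas : ∀ i, Measurable (R i)) (hmeas₀ : Measurable R₀)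
    (hindep : iIndepFun R P)
    (hid : ∀ i, IdentDistrib (R i) R₀ P P)
    (h0 : 0 < P {ω | R₀ ω < 1})
    (V : Set Ω)
    (hV : V = ⋂ (n : ℕ) (_ : 1 ≤ n), ⋃ i ∈ Finset.range n,
      {ω | ((n - i : ℕ) : ℝ) ≤ R i ω})
    (L : ℝ)
    (hL : Tendsto (fun n : ℕ => (n : ℝ) * (P {ω | (n : ℝ) ≤ R₀ ω}).toReal)
      atTop (nhds L))
    (hL1 : L < 1) :
    P V = 0 := by
  have hV_sub : V ⊆ ⋂ k, (Firework.cutAfter R k)ᶜ := by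
    subst hV
    intro ω hω
    simp only [Set.mem_iInter, Set.mem_iUnion, Finset.mem_range] at hω
    simp only [Set.mem_iInter, Set.mem_compl_iff, Firework.cutAfter,
      Firework.notReached, Finset.mem_Ico,
      Set.mem_ofPred_eq, not_forall, not_lt]
    intro k
    obtain ⟨i, hi, hle⟩ := hω (k + 1) k.succ_pos
    exact ⟨i, ⟨i.zero_le, hi⟩, hle⟩
  exact measure_mono_null hV_sub (Firework.measure_survival_eq_zero hmeas hindep hid
    (Firework.tsum_gapProb_eq_top hmeas₀ h0 hL hL1))

/-- **Homogeneous Firework Process.** If `n·P(R ≥ n) → L` with `L < 1`, then `P(V) = 0`. -/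
theorem firework_homogeneous_death_of_limit_lt_one
    {Ω : Type*} [MeasurableSpace Ω] (P : Measure Ω) [IsProbabilityMeasure P]
    (R : ℕ → Ω → ℝ) (R₀ : Ω → ℝ)
    (hmeas : ∀ i, Measurable (R i)) (hmeas₀ : Measurable R₀)
    (hnonneg : ∀ i ω, 0 ≤ R i ω)
    (hindep : iIndepFun R P)
    (hid : ∀ i, IdentDistrib (R i) R₀ P P)
    (h0 : 0 < P {ω | R₀ ω < 1}) (h1 : P {ω | R₀ ω < 1} < 1)
    (V : Set Ω)
    (hV : V = ⋂ (n : ℕ) (_ : 1 ≤ n), ⋃ i ∈ Finset.range n,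
      {ω | ((n - i : ℕ) : ℝ) ≤ R i ω})
    (L : ℝ)
    (hL : Tendsto (fun n : ℕ => (n : ℝ) * (P {ω | (n : ℝ) ≤ R₀ ω}).toReal)
      atTop (nhds L))
    (hL1 : L < 1) :
    P V = 0 :=
  firework_homogeneous_death_of_limit_lt_one_general P R R₀ hmeas hmeas₀ hindep hid h0 V hV L hL hL1
end

section
/- For the homogeneous Firework Process, suppose the sequence n·P(R ≥ n) converges to 1 as n → ∞, and suppose there exists N such that P(R ≥ n) ≤ 1/(n−1) for all n ≥ N. Then P(V) = 0. -/
/-!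
Let `q n = ∏_{k=1}^{n} P(R < k)`: restarted at any vertex `t`, the firework goes out before
`t + n` with probability `q n`. Let `f t` be the probability that the process started at `0`
activates exactly `0, …, t`. Splitting according to this first extinction gives the renewal
equation `q (n + 1) = ∑_{t ≤ n} f t * q (n - t)`, and `∑ f = 1 - P(V)`. For a renewal sequence with
defect `v` one has `v * ∑ q ≤ 1`. The tail bound `P(R ≥ n) ≤ 1 / (n - 1)` makes `(n - 1) * q n`
eventually nondecreasing, so `q n` is at least of order `1 / n`, `∑ q = ∞`, and `P(V) = 0`.
-/

open MeasureTheory ProbabilityTheory Filter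
open scoped ENNReal

open Finset Function

namespace Firework

theorem measurable_biSup_comap {ι Ω β : Type*} [MeasurableSpace β] (f : ι → Ω → β)
    {S : Set ι} {i : ι} (hi : i ∈ S) :
    Measurable[⨆ i ∈ S, MeasurableSpace.comap (f i) inferInstance] (f i) :=
  (comap_measurable (f i)).mono (le_iSup₂_of_le i hi le_rfl) le_rfl

theorem sum_range_succ_le_one_add_mul_of_renewal {q f : ℕ → ℝ≥0∞} (hq0 : q 0 = 1)
    (hq : ∀ n, q (n + 1) = ∑ t ∈ range (n + 1), f t * q (n - t)) (N : ℕ) :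
    ∑ n ∈ range (N + 1), q n ≤ 1 + (∑ t ∈ range N, f t) * ∑ n ∈ range N, q n := by
  rw [sum_range_succ', hq0, add_comm]
  gcongr
  simp_rw [hq]
  rw [sum_range_diag_flip N fun t k => f t * q k, sum_mul_sum]
  gcongr with t
  exact Nat.sub_le N t

theorem eq_zero_of_renewal_of_tsum_eq_top {q f : ℕ → ℝ≥0∞} {v : ℝ≥0∞} (hq0 : q 0 = 1)
    (hq : ∀ n, q (n + 1) = ∑ t ∈ range (n + 1), f t * q (n - t)) (hq_ne_top : ∀ n, q n ≠ ∞)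
    (hv : v + ∑' t, f t ≤ 1) (hq_sum : ∑' n, q n = ∞) : v = 0 := by
  set F := ∑' t, f t
  have hF : F ≠ ∞ := ne_top_of_le_ne_top ENNReal.one_ne_top (le_add_self.trans hv)
  have hpartial : ∀ N, v * ∑ n ∈ range N, q n ≤ 1 := by
    intro N
    set A := ∑ n ∈ range N, q n
    have hFA : F * A ≠ ∞ := ENNReal.mul_ne_top hF (ENNReal.sum_ne_top.mpr fun n _ => hq_ne_top n)
    refine (ENNReal.add_le_add_iff_right hFA).mp ?_
    calc v * A + F * A = (v + F) * A := (add_mul _ _ _).symm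
      _ ≤ 1 * A := by gcongr
      _ = A := one_mul A
      _ ≤ ∑ n ∈ range (N + 1), q n := sum_le_sum_of_subset (range_mono N.le_succ)
      _ ≤ 1 + (∑ t ∈ range N, f t) * A := sum_range_succ_le_one_add_mul_of_renewal hq0 hq N
      _ ≤ 1 + F * A := by gcongr; exact ENNReal.sum_le_tsum _
  have hle : v * ∑' n, q n ≤ 1 := by
    rw [ENNReal.tsum_eq_iSup_nat, ENNReal.mul_iSup]
    exact iSup_le hpartial
  by_contra hv0
  simp [hq_sum, ENNReal.mul_top hv0] at hle

theorem not_summable_of_sub_one_mul_le_mul_succ {u : ℕ → ℝ} {N : ℕ} (hN : 2 ≤ N)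
    (hu : 0 < u N) (h : ∀ n ≥ N, (n - 1 : ℝ) * u n ≤ n * u (n + 1)) : ¬ Summable u := by
  have hN' : (2 : ℝ) ≤ N := by exact_mod_cast hN
  set c := (N - 1 : ℝ) * u N
  have hc : 0 < c := mul_pos (by linarith) hu
  have hmono : ∀ n ≥ N, c ≤ (n - 1 : ℝ) * u n := by
    intro n hn
    induction n, hn using Nat.le_induction with
    | base => exact le_rfl
    | succ n hn ih => push_cast; linarith [h n hn]
  have hlow : ∀ n ≥ N, c * (1 / (n : ℝ)) ≤ u n := by
    intro n hn
    have hn' : (2 : ℝ) ≤ n := by exact_mod_cast hN.trans hn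
    have hun : 0 < u n := pos_of_mul_pos_right (hc.trans_le (hmono n hn)) (by linarith)
    rw [mul_one_div, div_le_iff₀ (by linarith)]
    nlinarith [hmono n hn]
  intro hsum
  refine Real.not_summable_one_div_natCast ((summable_mul_left_iff hc.ne').mp ?_)
  refine hsum.of_norm_bounded_eventually_nat ?_
  filter_upwards [eventually_ge_atTop N] with n hn
  rw [Real.norm_of_nonneg (by positivity)]
  exact hlow n hn

section

variable {Ω : Type*} (R : ℕ → Ω → ℝ)

/-- Restarted at vertex `t`, the firework goes out before reaching `t + n`. -/
def deathWindow (t n : ℕ) : Set Ω :=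
  ⋂ j ∈ range n, {ω | R (t + j) ω < (n - j : ℕ)}

/-- The activated vertices are exactly `0, …, t`. -/
def firstDeath : ℕ → Set Ω :=
  disjointed fun t => deathWindow R 0 (t + 1)

variable {R}

theorem mem_deathWindow {t n : ℕ} {ω : Ω} :
    ω ∈ deathWindow R t n ↔ ∀ j < n, R (t + j) ω < (n - j : ℕ) := by
  simp [deathWindow]

theorem deathWindow_inter_deathWindow_add (t s m : ℕ) :
    deathWindow R t s ∩ deathWindow R t (s + m) =
      deathWindow R t s ∩ deathWindow R (t + s) m := by
  ext ω
  simp only [Set.mem_inter_iff, mem_deathWindow, and_congr_right_iff]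
  intro hs
  constructor
  · intro h j hj
    simpa [add_assoc, show s + m - (s + j) = m - j by omega] using h (s + j) (by omega)
  · intro h j hj
    rcases lt_or_ge j s with hjs | hjs
    · exact (hs j hjs).trans_le (by gcongr; omega)
    · obtain ⟨k, rfl⟩ := Nat.exists_eq_add_of_le hjs
      simpa [add_assoc, show s + m - (s + k) = m - k by omega] using h k (by omega)

theorem pairwise_disjoint_firstDeath : Pairwise (Disjoint on firstDeath R) :=
  disjoint_disjointed _

theorem firstDeath_subset (t : ℕ) : firstDeath R t ⊆ deathWindow R 0 (t + 1) :=
  disjointed_subset _ t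

theorem firstDeath_inter_deathWindow {t n : ℕ} (htn : t ≤ n) :
    firstDeath R t ∩ deathWindow R 0 (n + 1) =
      firstDeath R t ∩ deathWindow R (t + 1) (n - t) := by
  have h := deathWindow_inter_deathWindow_add (R := R) 0 (t + 1) (n - t)
  rw [show t + 1 + (n - t) = n + 1 by omega, zero_add] at h
  rw [← Set.inter_eq_left.mpr (firstDeath_subset t), Set.inter_assoc, h, ← Set.inter_assoc]

theorem deathWindow_eq_biUnion_firstDeath (n : ℕ) :
    deathWindow R 0 (n + 1) =
      ⋃ t ∈ range (n + 1), firstDeath R t ∩ deathWindow R (t + 1) (n - t) := by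
  have hcover : deathWindow R 0 (n + 1) ⊆ ⋃ t ∈ range (n + 1), firstDeath R t := by
    rw [firstDeath, biUnion_range_succ_disjointed]
    exact le_partialSups (fun t => deathWindow R 0 (t + 1)) n
  conv_lhs => rw [← Set.inter_eq_right.mpr hcover, Set.iUnion₂_inter]
  refine Set.iUnion₂_congr fun t ht => firstDeath_inter_deathWindow ?_
  exact Nat.lt_succ_iff.mp (mem_range.mp ht)

theorem measurableSet_deathWindow {m : MeasurableSpace Ω} {t n : ℕ}
    (hR : ∀ j < n, Measurable[m] (R (t + j))) : MeasurableSet[m] (deathWindow R t n) :=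
  Finset.measurableSet_biInter _ fun j hj => hR j (mem_range.mp hj) measurableSet_Iio

theorem measurableSet_firstDeath {m : MeasurableSpace Ω} {t : ℕ}
    (hR : ∀ i ≤ t, Measurable[m] (R i)) : MeasurableSet[m] (firstDeath R t) := by
  rw [firstDeath, disjointed_eq_inter_compl]
  refine (measurableSet_deathWindow fun j hj => hR _ (by omega)).inter ?_
  exact .iInter fun s => .iInter fun hs =>
    (measurableSet_deathWindow fun j hj => hR _ (by omega)).compl

theorem iInter_iUnion_le_eq_compl_iUnion_firstDeath :
    (⋂ (n : ℕ) (_ : 1 ≤ n), ⋃ i ∈ range n, {ω | ((n - i : ℕ) : ℝ) ≤ R i ω}) =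
      (⋃ t, firstDeath R t)ᶜ := by
  rw [firstDeath, iUnion_disjointed]
  ext ω
  simp only [Set.mem_iInter, Set.mem_iUnion, Set.mem_compl_iff, mem_deathWindow, not_exists,
    not_forall, not_lt, mem_range, Set.mem_ofPred_eq, zero_add, exists_prop]
  exact ⟨fun h n => h (n + 1) n.succ_pos,
    fun h n hn => by simpa [Nat.sub_add_cancel hn] using h (n - 1)⟩

variable [MeasurableSpace Ω] (P : Measure Ω)

theorem measure_deathWindow {R₀ : Ω → ℝ} (hindep : iIndepFun R P)
    (hid : ∀ i, IdentDistrib (R i) R₀ P P) (t n : ℕ) :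
    P (deathWindow R t n) = ∏ k ∈ range n, P {ω | R₀ ω < (k + 1 : ℕ)} := by
  refine ((hindep.precomp (add_right_injective t)).meas_biInter (S := range n)
    (s := fun j => R (t + j) ⁻¹' Set.Iio (n - j : ℕ))
    fun j _ => ⟨_, measurableSet_Iio, rfl⟩).trans ?_
  rw [← prod_range_reflect]
  refine prod_congr rfl fun j hj => ?_
  rw [show n - (n - 1 - j) = j + 1 by have := mem_range.mp hj; omega]
  exact (hid _).measure_mem_eq measurableSet_Iio

theorem measure_firstDeath_inter_deathWindow (hmeas : ∀ i, Measurable (R i))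
    (hindep : iIndepFun R P) (t m : ℕ) :
    P (firstDeath R t ∩ deathWindow R (t + 1) m) =
      P (firstDeath R t) * P (deathWindow R (t + 1) m) := by
  have hindep' := indep_iSup_of_disjoint (fun i => (hmeas i).comap_le) hindep.iIndep
    (Set.Iic_disjoint_Ioi (le_refl t))
  refine (Indep_iff _ _ _).mp hindep' _ _ ?_ ?_
  · exact measurableSet_firstDeath fun i hi => measurable_biSup_comap R (S := Set.Iic t) hi
  · exact measurableSet_deathWindow fun j _ =>
      measurable_biSup_comap R (S := Set.Ioi t) (Set.mem_Ioi.mpr (by omega))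

theorem measure_deathWindow_zero_succ (hmeas : ∀ i, Measurable (R i)) (hindep : iIndepFun R P)
    (n : ℕ) : P (deathWindow R 0 (n + 1)) =
      ∑ t ∈ range (n + 1), P (firstDeath R t) * P (deathWindow R (t + 1) (n - t)) := by
  rw [deathWindow_eq_biUnion_firstDeath, measure_biUnion_finset]
  · exact sum_congr rfl fun t _ => measure_firstDeath_inter_deathWindow P hmeas hindep t _
  · exact fun s _ t _ hst =>
      (pairwise_disjoint_firstDeath hst).mono Set.inter_subset_left Set.inter_subset_left
  · exact fun t _ => (measurableSet_firstDeath fun i _ => hmeas i).inter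
      (measurableSet_deathWindow fun j _ => hmeas _)

end

theorem tsum_prod_measure_lt_eq_top_of_tail_le {Ω : Type*} [MeasurableSpace Ω] {μ : Measure Ω}
    [IsProbabilityMeasure μ] {X : Ω → ℝ} (hX : Measurable X) (h0 : 0 < μ {ω | X ω < 1}) {N : ℕ}
    (hN : ∀ n ≥ N, μ.real {ω | (n : ℝ) ≤ X ω} ≤ 1 / ((n : ℝ) - 1)) :
    ∑' n, ∏ k ∈ range n, μ {ω | X ω < (k + 1 : ℕ)} = ∞ := by
  by_contra hfin
  refine not_summable_of_sub_one_mul_le_mul_succ (le_max_right N 2) ?_ ?_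
    (ENNReal.summable_toReal hfin)
  · refine ENNReal.toReal_pos (prod_ne_zero_iff.mpr fun k _ => (h0.trans_le ?_).ne')
      (ENNReal.prod_ne_top fun k _ => measure_ne_top μ _)
    exact measure_mono fun ω (hω : X ω < 1) =>
      show X ω < (k + 1 : ℕ) by push_cast; linarith [k.cast_nonneg (α := ℝ)]
  · intro n hn
    have hn2 : (2 : ℝ) ≤ n := by exact_mod_cast (le_max_right N 2).trans hn
    have htail := hN (n + 1) ((le_max_left N 2).trans (hn.trans n.le_succ))
    rw [Nat.cast_add_one, add_sub_cancel_right] at htail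
    have hcompl :
        μ.real {ω | X ω < (n + 1 : ℕ)} = 1 - μ.real {ω | ((n + 1 : ℕ) : ℝ) ≤ X ω} := by
      rw [← probReal_compl_eq_one_sub (measurableSet_le measurable_const hX)]
      congr 1; ext ω; simp
    have hfactor : (n - 1 : ℝ) ≤ n * μ.real {ω | X ω < (n + 1 : ℕ)} := by
      rw [hcompl, Nat.cast_add_one]
      have : (n : ℝ) * μ.real {ω | (n : ℝ) + 1 ≤ X ω} ≤ 1 := by
        calc _ ≤ (n : ℝ) * (1 / n) := by gcongr
          _ = 1 := by field_simp
      linarith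
    rw [prod_range_succ, ENNReal.toReal_mul, ← measureReal_def, mul_left_comm,
      mul_comm (n - 1 : ℝ)]
    exact mul_le_mul_of_nonneg_left hfactor ENNReal.toReal_nonneg

end Firework

open Firework in
theorem firework_homogeneous_death_of_limit_eq_one_general
    {Ω : Type*} [MeasurableSpace Ω] (P : Measure Ω) [IsProbabilityMeasure P]
    (R : ℕ → Ω → ℝ) (R₀ : Ω → ℝ)
    (hmeas : ∀ i, Measurable (R i)) (hmeas₀ : Measurable R₀)
    (hindep : iIndepFun R P)
    (hid : ∀ i, IdentDistrib (R i) R₀ P P)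
    (h0 : 0 < P {ω | R₀ ω < 1})
    (V : Set Ω)
    (hV : V = ⋂ (n : ℕ) (_ : 1 ≤ n), ⋃ i ∈ Finset.range n,
      {ω | ((n - i : ℕ) : ℝ) ≤ R i ω})
    (hN : ∃ N : ℕ, ∀ n ≥ N, (P {ω | (n : ℝ) ≤ R₀ ω}).toReal ≤ 1 / ((n : ℝ) - 1)) :
    P V = 0 := by
  obtain ⟨N, hN⟩ := hN
  have hwindow := measure_deathWindow P hindep hid
  have hdeath : MeasurableSet (⋃ t, firstDeath R t) :=
    .iUnion fun t => measurableSet_firstDeath fun i _ => hmeas i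
  rw [hV, iInter_iUnion_le_eq_compl_iUnion_firstDeath]
  refine eq_zero_of_renewal_of_tsum_eq_top
    (q := fun n => ∏ k ∈ range n, P {ω | R₀ ω < (k + 1 : ℕ)})
    (f := fun t => P (firstDeath R t)) (prod_range_zero _) (fun n => ?_)
    (fun n => ENNReal.prod_ne_top fun k _ => measure_ne_top P _) ?_
    (tsum_prod_measure_lt_eq_top_of_tail_le hmeas₀ h0 hN)
  · rw [← hwindow 0 (n + 1), measure_deathWindow_zero_succ P hmeas hindep]
    simp only [hwindow]
  · rw [← measure_iUnion pairwise_disjoint_firstDeath fun t =>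
      measurableSet_firstDeath fun i _ => hmeas i, add_comm, measure_add_measure_compl hdeath,
      measure_univ]

/-- **Homogeneous Firework Process.** If `n·P(R ≥ n) → 1` and eventually
`P(R ≥ n) ≤ 1/(n-1)`, then `P(V) = 0`. -/
theorem firework_homogeneous_death_of_limit_eq_one
    {Ω : Type*} [MeasurableSpace Ω] (P : Measure Ω) [IsProbabilityMeasure P]
    (R : ℕ → Ω → ℝ) (R₀ : Ω → ℝ)
    (hmeas : ∀ i, Measurable (R i)) (hmeas₀ : Measurable R₀)
    (hnonneg : ∀ i ω, 0 ≤ R i ω)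
    (hindep : iIndepFun R P)
    (hid : ∀ i, IdentDistrib (R i) R₀ P P)
    (h0 : 0 < P {ω | R₀ ω < 1}) (h1 : P {ω | R₀ ω < 1} < 1)
    (V : Set Ω)
    (hV : V = ⋂ (n : ℕ) (_ : 1 ≤ n), ⋃ i ∈ Finset.range n,
      {ω | ((n - i : ℕ) : ℝ) ≤ R i ω})
    (hL : Tendsto (fun n : ℕ => (n : ℝ) * (P {ω | (n : ℝ) ≤ R₀ ω}).toReal)
      atTop (nhds 1))
    (hN : ∃ N : ℕ, ∀ n ≥ N, (P {ω | (n : ℝ) ≤ R₀ ω}).toReal ≤ 1 / ((n : ℝ) - 1)) :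
    P V = 0 :=
  firework_homogeneous_death_of_limit_eq_one_general P R R₀ hmeas hmeas₀ hindep hid h0 V hV hN
end

section
/- For the homogeneous Firework Process with ℕ-valued radii of influence, if R has finite expectation (equivalently, ∑_{n=1}^{∞} P(R ≥ n) < ∞), then P(V) = 0. -/
/-!
Cut `ℕ` into consecutive blocks `[n j, n (j + 1))`. Survival forces, for every `j`, either some
vertex of block `j` to reach `n (j + 1)`, or some vertex before `n j` to jump over the whole block.
Since `E R < ∞` and `P(R < 1) > 0`, the products `∏_{k=1}^m P(R < k)` stay above some `c > 0`,
so each block, independently of the others, fails to reach its right end with probability at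
least `c`; by the second Borel–Cantelli lemma this happens for infinitely many blocks. Choosing
the block lengths `g j` so that the tails `∑_{k > g j} P(R ≥ k)` are summable, the first
Borel–Cantelli lemma lets long jumps over a block happen for only finitely many `j`.
Hence `P(V) = 0`.
-/

open MeasureTheory ProbabilityTheory Filter Finset Function
open scoped ENNReal

namespace ENNReal

theorem one_sub_sum_le_prod_one_sub {ι : Type*} (s : Finset ι) (f : ι → ℝ≥0∞) :
    1 - ∑ i ∈ s, f i ≤ ∏ i ∈ s, (1 - f i) := by
  classical
  induction s using Finset.cons_induction with
  | empty => simp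
  | cons a s _ ih =>
    rw [prod_cons, sum_cons, ← tsub_tsub]
    calc 1 - f a - ∑ i ∈ s, f i ≤ (1 - f a) * (1 - ∑ i ∈ s, f i) := by
          rw [tsub_le_iff_right]
          calc 1 - f a ≤ (1 - f a) * (1 - ∑ i ∈ s, f i + ∑ i ∈ s, f i) :=
                le_mul_of_one_le_right' le_tsub_add
            _ ≤ (1 - f a) * (1 - ∑ i ∈ s, f i) + ∑ i ∈ s, f i := by
                rw [mul_add]
                gcongr
                exact mul_le_of_le_one_left' tsub_le_self
      _ ≤ (1 - f a) * ∏ i ∈ s, (1 - f i) := by gcongr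

theorem exists_pos_le_prod_range_one_sub {f : ℕ → ℝ≥0∞} (hf : ∀ k, f k < 1)
    (hsum : ∑' k, f k ≠ ∞) : ∃ c, 0 < c ∧ ∀ m, c ≤ ∏ k ∈ range m, (1 - f k) := by
  obtain ⟨K, hK⟩ : ∃ K, ∑' k, f (k + K) ≤ 2⁻¹ :=
    ((tendsto_sum_nat_add f hsum).eventually (ge_mem_nhds (by simp))).exists
  refine ⟨(∏ k ∈ range K, (1 - f k)) * 2⁻¹, ?_, fun m => ?_⟩
  · refine ENNReal.mul_pos (prod_ne_zero_iff.2 fun k _ => (tsub_pos_of_lt (hf k)).ne') (by simp)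
  have htail : 2⁻¹ ≤ ∏ k ∈ Ico K (max m K), (1 - f k) := calc
    2⁻¹ = 1 - 2⁻¹ := one_sub_inv_two.symm
    _ ≤ 1 - ∑ k ∈ Ico K (max m K), f k := by
        gcongr
        rw [sum_Ico_eq_sum_range]
        simpa only [add_comm K] using hK.trans' (ENNReal.sum_le_tsum _)
    _ ≤ _ := one_sub_sum_le_prod_one_sub _ _
  calc (∏ k ∈ range K, (1 - f k)) * 2⁻¹
      ≤ (∏ k ∈ range K, (1 - f k)) * ∏ k ∈ Ico K (max m K), (1 - f k) := by gcongr
    _ = ∏ k ∈ range (max m K), (1 - f k) := prod_range_mul_prod_Ico _ (le_max_right _ _)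
    _ ≤ ∏ k ∈ range m, (1 - f k) :=
        prod_le_prod_of_subset_of_le_one' (range_subset_range.2 (le_max_left _ _))
          fun _ _ _ => tsub_le_self

theorem exists_pos_tsum_tsum_nat_add_ne_top {f : ℕ → ℝ≥0∞} (hf : ∑' k, f k ≠ ∞) :
    ∃ g : ℕ → ℕ, (∀ j, 0 < g j) ∧ ∑' j, ∑' k, f (k + g j) ≠ ∞ := by
  have (j : ℕ) : ∃ g, 0 < g ∧ ∑' k, f (k + g) ≤ 2⁻¹ ^ j :=
    ((eventually_gt_atTop 0).and <|
      (tendsto_sum_nat_add f hf).eventually (ge_mem_nhds (ENNReal.pow_pos (by simp) j))).exists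
  choose g hg_pos hg using this
  exact ⟨g, hg_pos, ne_top_of_le_ne_top (tsum_geometric_lt_top.2 (by norm_num)).ne
    (ENNReal.tsum_le_tsum hg)⟩

end ENNReal

theorem ProbabilityTheory.iIndepFun.iIndepSet_biInter_preimage {Ω ι κ β : Type*}
    [MeasurableSpace Ω] [MeasurableSpace β] {μ : Measure Ω} {X : ι → Ω → β}
    (hX : iIndepFun X μ) (hXm : ∀ i, Measurable (X i)) {S : κ → Finset ι}
    (hS : Pairwise (Disjoint on S)) {A : κ → ι → Set β} (hA : ∀ k i, MeasurableSet (A k i)) :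
    iIndepSet (fun k => ⋂ i ∈ S k, X i ⁻¹' A k i) μ := by
  classical
  rw [iIndepSet_iff_meas_biInter fun k => measurableSet_biInter _ fun i _ => hXm i (hA k i)]
  intro s
  -- on the union of the blocks `S k`, `k ∈ s`, each index lies in exactly one block
  set B : ι → Set β := fun i => ⋂ k ∈ s.filter (i ∈ S ·), A k i
  have hB : ∀ k ∈ s, ∀ i ∈ S k, B i = A k i := by
    intro k hk i hi
    have : s.filter (i ∈ S ·) = {k} := by
      ext l
      simp only [mem_filter, mem_singleton]
      refine ⟨fun ⟨_, hil⟩ => ?_, fun hl => hl ▸ ⟨hk, hi⟩⟩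
      by_contra hne
      exact disjoint_left.mp (hS hne) hil hi
    simp only [B, this, mem_singleton, Set.iInter_iInter_eq_left]
  calc μ (⋂ k ∈ s, ⋂ i ∈ S k, X i ⁻¹' A k i) = μ (⋂ i ∈ s.biUnion S, X i ⁻¹' B i) := by
        rw [set_biInter_biUnion]
        refine congrArg μ (Set.iInter₂_congr fun k hk => Set.iInter₂_congr fun i hi => ?_)
        rw [hB k hk i hi]
    _ = ∏ i ∈ s.biUnion S, μ (X i ⁻¹' B i) :=
        hX.measure_inter_preimage_eq_mul _ fun i _ =>
          measurableSet_biInter _ fun k _ => hA k i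
    _ = ∏ k ∈ s, ∏ i ∈ S k, μ (X i ⁻¹' A k i) := by
        rw [prod_biUnion (hS.set_pairwise _)]
        exact prod_congr rfl fun k hk => prod_congr rfl fun i hi => by rw [hB k hk i hi]
    _ = ∏ k ∈ s, μ (⋂ i ∈ S k, X i ⁻¹' A k i) :=
        prod_congr rfl fun k _ => (hX.measure_inter_preimage_eq_mul _ fun i _ => hA k i).symm

namespace Firework

variable {Ω : Type*} {R : ℕ → Ω → ℕ}

def reaches (R : ℕ → Ω → ℕ) (s : Finset ℕ) (b : ℕ) : Set Ω :=
  ⋃ i ∈ s, {ω | b - i ≤ R i ω}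

def survival (R : ℕ → Ω → ℕ) : Set Ω :=
  ⋂ (n : ℕ) (_ : 1 ≤ n), reaches R (range n) n

theorem compl_reaches (s : Finset ℕ) (b : ℕ) :
    (reaches R s b)ᶜ = ⋂ i ∈ s, R i ⁻¹' {x | x < b - i} := by
  simp only [reaches, Set.compl_iUnion, Set.compl_ofPred, not_le, Set.preimage_ofPred_eq]

theorem survival_subset_reaches_union {a b : ℕ} (hab : a ≤ b) (hb : 1 ≤ b) :
    survival R ⊆ reaches R (range a) b ∪ reaches R (Ico a b) b := by
  intro ω hω
  have hb : ω ∈ reaches R (range b) b := Set.mem_iInter₂.mp hω b hb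
  rwa [range_eq_Ico, ← Ico_union_Ico_eq_Ico (Nat.zero_le a) hab, reaches,
    set_biUnion_union, ← range_eq_Ico] at hb

variable [MeasurableSpace Ω] {P : Measure Ω} {R₀ : Ω → ℕ}

theorem measurableSet_reaches (hR : ∀ i, Measurable (R i)) (s : Finset ℕ) (b : ℕ) :
    MeasurableSet (reaches R s b) :=
  measurableSet_biUnion _ fun i _ => hR i .of_discrete

theorem measure_reaches_le (hid : ∀ i, IdentDistrib (R i) R₀ P P) (s : Finset ℕ) (b : ℕ) :
    P (reaches R s b) ≤ ∑ i ∈ s, P {ω | b - i ≤ R₀ ω} :=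
  (measure_biUnion_finset_le _ _).trans_eq <|
    sum_congr rfl fun i _ => (hid i).measure_mem_eq (s := {x | b - i ≤ x}) .of_discrete

theorem measure_compl_reaches [IsProbabilityMeasure P] (hindep : iIndepFun R P)
    (hid : ∀ i, IdentDistrib (R i) R₀ P P) (hR₀ : Measurable R₀) (s : Finset ℕ) (b : ℕ) :
    P (reaches R s b)ᶜ = ∏ i ∈ s, (1 - P {ω | b - i ≤ R₀ ω}) := by
  rw [compl_reaches, hindep.measure_inter_preimage_eq_mul _ fun _ _ => .of_discrete]
  refine prod_congr rfl fun i _ => ?_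
  rw [(hid i).measure_mem_eq .of_discrete,
    ← prob_compl_eq_one_sub (measurableSet_le measurable_const hR₀)]
  simp only [Set.compl_ofPred, not_le, Set.preimage_ofPred_eq]

theorem iIndepSet_compl_reaches {κ : Type*} (hindep : iIndepFun R P)
    (hR : ∀ i, Measurable (R i)) {S : κ → Finset ℕ} (hS : Pairwise (Disjoint on S)) (b : κ → ℕ) :
    iIndepSet (fun k => (reaches R (S k) (b k))ᶜ) P := by
  simp_rw [compl_reaches]
  exact hindep.iIndepSet_biInter_preimage hR hS fun _ _ => .of_discrete

theorem measure_reaches_range_le (hid : ∀ i, IdentDistrib (R i) R₀ P P) {a b : ℕ}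
    (hab : a ≤ b) : P (reaches R (range a) b) ≤ ∑' k, P {ω | k + (b - a) + 1 ≤ R₀ ω} := by
  refine (measure_reaches_le hid _ _).trans ?_
  rw [← sum_range_reflect]
  refine le_of_eq_of_le (sum_congr rfl fun k hk => ?_) (ENNReal.sum_le_tsum _)
  have := mem_range.mp hk
  rw [show b - (a - 1 - k) = k + (b - a) + 1 by omega]

theorem measure_compl_reaches_Ico [IsProbabilityMeasure P] (hindep : iIndepFun R P)
    (hid : ∀ i, IdentDistrib (R i) R₀ P P) (hR₀ : Measurable R₀) (a b : ℕ) :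
    P (reaches R (Ico a b) b)ᶜ = ∏ k ∈ range (b - a), (1 - P {ω | k + 1 ≤ R₀ ω}) := by
  rw [measure_compl_reaches hindep hid hR₀, prod_Ico_eq_prod_range, ← prod_range_reflect]
  refine prod_congr rfl fun k hk => ?_
  have := mem_range.mp hk
  rw [show b - (a + (b - a - 1 - k)) = k + 1 by omega]

theorem measure_survival_eq_zero_of_blocks [IsProbabilityMeasure P] (hindep : iIndepFun R P)
    (hR : ∀ i, Measurable (R i)) {n : ℕ → ℕ} (hn : StrictMono n)
    (hjump : ∑' j, P (reaches R (range (n j)) (n (j + 1))) ≠ ∞)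
    (hblock : ∑' j, P (reaches R (Ico (n j) (n (j + 1))) (n (j + 1)))ᶜ = ∞) :
    P (survival R) = 0 := by
  set W := fun j => (reaches R (Ico (n j) (n (j + 1))) (n (j + 1)))ᶜ
  have hW_meas (j : ℕ) : MeasurableSet (W j) := (measurableSet_reaches hR _ _).compl
  have hW_disj : Pairwise (Disjoint on fun j => Ico (n j) (n (j + 1))) := fun i j hij => by
    simpa [← disjoint_coe] using hn.monotone.pairwise_disjoint_on_Ico_succ hij
  have hW_often : P (limsup W atTop) = 1 :=
    measure_limsup_eq_one hW_meas (iIndepSet_compl_reaches hindep hR hW_disj _) hblock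
  have hsub : survival R ⊆
      limsup (fun j => reaches R (range (n j)) (n (j + 1))) atTop ∪ (limsup W atTop)ᶜ := by
    intro ω hω
    rw [Set.union_comm, Set.mem_union, Set.mem_compl_iff, ← imp_iff_not_or,
      mem_limsup_iff_frequently_mem, mem_limsup_iff_frequently_mem]
    refine fun hfreq => hfreq.mono fun j hj => ?_
    exact (survival_subset_reaches_union (hn.monotone j.le_succ)
      (Nat.one_le_of_lt (hn j.lt_succ_self)) hω).resolve_right hj
  exact measure_mono_null hsub <| measure_union_null (measure_limsup_atTop_eq_zero hjump)
    ((prob_compl_eq_zero_iff (.measurableSet_limsup hW_meas)).2 hW_often)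

end Firework

theorem firework_homogeneous_death_of_finite_expectation_general
    {Ω : Type*} [MeasurableSpace Ω] (P : Measure Ω) [IsProbabilityMeasure P]
    (R : ℕ → Ω → ℕ) (R₀ : Ω → ℕ)
    (hmeas : ∀ i, Measurable (R i)) (hmeas₀ : Measurable R₀)
    (hindep : iIndepFun R P)
    (hid : ∀ i, IdentDistrib (R i) R₀ P P)
    (h0 : 0 < P {ω | R₀ ω < 1})
    (V : Set Ω)
    (hV : V = ⋂ (n : ℕ) (_ : 1 ≤ n), ⋃ i ∈ Finset.range n,
      {ω | n - i ≤ R i ω})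
    (hE : (∑' n : ℕ, P {ω | n + 1 ≤ R₀ ω}) ≠ ⊤) :
    P V = 0 := by
  subst hV
  have hp_lt_one (k : ℕ) : P {ω | k + 1 ≤ R₀ ω} < 1 := calc
    P {ω | k + 1 ≤ R₀ ω} ≤ P {ω | R₀ ω < 1}ᶜ :=
      measure_mono fun ω (hω : k + 1 ≤ R₀ ω) => show ¬R₀ ω < 1 by omega
    _ = 1 - P {ω | R₀ ω < 1} := prob_compl_eq_one_sub (measurableSet_lt hmeas₀ measurable_const)
    _ < 1 := ENNReal.sub_lt_self ENNReal.one_ne_top one_ne_zero h0.ne'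
  obtain ⟨c, hc_pos, hc⟩ := ENNReal.exists_pos_le_prod_range_one_sub hp_lt_one hE
  obtain ⟨g, hg_pos, hg⟩ := ENNReal.exists_pos_tsum_tsum_nat_add_ne_top hE
  set n : ℕ → ℕ := fun j => ∑ k ∈ range j, g k
  have hn : StrictMono n :=
    strictMono_nat_of_lt_succ fun j => by simp [n, sum_range_succ, hg_pos j]
  have hgap (j : ℕ) : n (j + 1) - n j = g j := by simp [n, sum_range_succ]
  refine Firework.measure_survival_eq_zero_of_blocks hindep hmeas hn
    (ne_top_of_le_ne_top hg <| ENNReal.tsum_le_tsum fun j => ?_) (top_unique ?_)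
  · simpa only [hgap] using Firework.measure_reaches_range_le hid (hn.monotone j.le_succ)
  · calc ∞ = ∑' _ : ℕ, c := (ENNReal.tsum_const_eq_top_of_ne_zero hc_pos.ne').symm
      _ ≤ _ := ENNReal.tsum_le_tsum fun j => by
          simpa only [Firework.measure_compl_reaches_Ico hindep hid hmeas₀, hgap] using hc (g j)

/-- **Homogeneous Firework Process, ℕ-valued radii.** If `R` has finite expectation,
i.e. `∑_{n=1}^∞ P(R ≥ n) < ∞`, then `P(V) = 0`. -/
theorem firework_homogeneous_death_of_finite_expectation
    {Ω : Type*} [MeasurableSpace Ω] (P : Measure Ω) [IsProbabilityMeasure P]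
    (R : ℕ → Ω → ℕ) (R₀ : Ω → ℕ)
    (hmeas : ∀ i, Measurable (R i)) (hmeas₀ : Measurable R₀)
    (hindep : iIndepFun R P)
    (hid : ∀ i, IdentDistrib (R i) R₀ P P)
    (h0 : 0 < P {ω | R₀ ω < 1}) (h1 : P {ω | R₀ ω < 1} < 1)
    (V : Set Ω)
    (hV : V = ⋂ (n : ℕ) (_ : 1 ≤ n), ⋃ i ∈ Finset.range n,
      {ω | n - i ≤ R i ω})
    (hE : (∑' n : ℕ, P {ω | n + 1 ≤ R₀ ω}) ≠ ⊤) :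
    P V = 0 :=
  firework_homogeneous_death_of_finite_expectation_general P R R₀ hmeas hmeas₀ hindep hid h0 V hV hE
end

section
/- Consider the homogeneous Firework Process in which R has the power-law distribution P(R = k) = Z_α·(k+1)^{−α} for all k ∈ ℕ, where α > 1 and Z_α = ( ∑_{j=0}^{∞} (j+1)^{−α} )^{−1}. If 1 < α < 2, then P(V) > 0. -/
/-!
Cut the vertices into dyadic blocks `[2^k, 2^(k+1))`. If `R_0 ≥ 2^(K+1)` and, for every `k ≥ K`,
some vertex of block `k` reaches `2^(k+2)`, then every vertex is activated. By independence,
block `k` fails with probability at most `(1 - P(R ≥ 2^(k+2)))^(2^k) ≤ exp(-2^k P(R ≥ 2^(k+2)))`,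
and the power law gives `P(R ≥ 2^j) ≥ c q^j` with `q = 2^(1-α)`. The exponent thus grows like
`(2q)^k`, and `2q > 1` because `α < 2`, so block `k` fails with probability below `2^(-k)` for
large `k`. Since `q > 1/2`, the probability `P(R_0 ≥ 2^(K+1)) ≥ c q^(K+1)` beats
`∑_{k ≥ K} 2^(-k) = 2^(1-K)` for large `K`, and a union bound gives `P(V) > 0`.
-/

open MeasureTheory ProbabilityTheory Filter Finset Real Topology
open scoped ENNReal

lemma exists_reach_of_dyadic_blocks {r : ℕ → ℕ} {K : ℕ} (h0 : 2 ^ (K + 1) ≤ r 0)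
    (hblock : ∀ k, K ≤ k → ∃ i ∈ Ico (2 ^ k) (2 ^ (k + 1)), 2 ^ (k + 2) ≤ i + r i)
    {n : ℕ} (hn : 1 ≤ n) : ∃ i ∈ range n, n - i ≤ r i := by
  by_cases hsmall : n ≤ 2 ^ (K + 1)
  · exact ⟨0, mem_range.2 hn, by omega⟩
  have hne : n - 1 ≠ 0 := by have := Nat.one_le_two_pow (n := K + 1); omega
  have hK : K + 1 ≤ Nat.log 2 (n - 1) := (Nat.le_log_iff_pow_le one_lt_two hne).2 (by omega)
  set k := Nat.log 2 (n - 1) - 1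
  have hlow : 2 ^ (k + 1) ≤ n - 1 := by
    rw [show k + 1 = Nat.log 2 (n - 1) by omega]
    exact Nat.pow_log_le_self 2 hne
  have hup : n - 1 < 2 ^ (k + 2) := by
    rw [show k + 2 = Nat.log 2 (n - 1) + 1 by omega]
    exact Nat.lt_pow_succ_log_self one_lt_two _
  obtain ⟨i, hi, hreach⟩ := hblock k (by omega)
  rw [mem_Ico] at hi
  exact ⟨i, mem_range.2 (by omega), by omega⟩

lemma ProbabilityTheory.iIndepFun.measure_biInter_preimage_le_pow {Ω ι β : Type*}
    [MeasurableSpace Ω] [MeasurableSpace β] {P : Measure Ω} {R : ι → Ω → β} {R₀ : Ω → β}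
    (hindep : iIndepFun R P) (hid : ∀ i, IdentDistrib (R i) R₀ P P) (s : Finset ι)
    {B : ι → Set β} {C : Set β} (hB : ∀ i ∈ s, MeasurableSet (B i)) (hBC : ∀ i ∈ s, B i ⊆ C)
    (hC : MeasurableSet C) :
    P (⋂ i ∈ s, R i ⁻¹' B i) ≤ P (R₀ ⁻¹' C) ^ #s := by
  rw [hindep.meas_biInter fun i hi ↦ ⟨B i, hB i hi, rfl⟩]
  refine prod_le_pow_card _ _ _ fun i hi ↦ ?_
  rw [← (hid i).measure_mem_eq hC]
  exact measure_mono (Set.preimage_mono (hBC i hi))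

lemma prob_compl_pow_le_exp {α : Type*} [MeasurableSpace α] {μ : Measure α}
    [IsProbabilityMeasure μ] {s : Set α} (hs : MeasurableSet s) (n : ℕ) :
    μ sᶜ ^ n ≤ ENNReal.ofReal (exp (-(n * μ.real s))) := by
  rw [← ofReal_measureReal, ← ENNReal.ofReal_pow measureReal_nonneg,
    probReal_compl_eq_one_sub hs]
  refine ENNReal.ofReal_le_ofReal ?_
  calc (1 - μ.real s) ^ n ≤ exp (-μ.real s) ^ n :=
        pow_le_pow_left₀ (by simp [measureReal_le_one]) (one_sub_le_exp_neg _) n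
    _ = exp (-(n * μ.real s)) := by rw [← exp_nat_mul]; ring_nf

lemma le_measureReal_Ici_two_pow_of_powerLaw {ν : Measure ℕ} [IsFiniteMeasure ν] {Z α : ℝ}
    (hZ : 0 ≤ Z) (hα : 0 ≤ α) (hν : ∀ k : ℕ, ν.real {k} = Z * ((k : ℝ) + 1) ^ (-α)) (j : ℕ) :
    Z * 2 ^ (-α) * (2 * 2 ^ (-α)) ^ j ≤ ν.real (Set.Ici (2 ^ j)) := by
  have hterm : ∀ k ∈ Ico (2 ^ j) (2 ^ (j + 1)),
      Z * ((2 : ℝ) ^ (-α)) ^ (j + 1) ≤ ν.real {k} := by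
    intro k hk
    have hk' : (k : ℝ) + 1 ≤ 2 ^ (j + 1) := by
      rw [mem_Ico] at hk
      exact_mod_cast hk.2
    rw [hν, rpow_pow_comm zero_le_two]
    exact mul_le_mul_of_nonneg_left (rpow_le_rpow_of_nonpos (by positivity) hk' (by linarith)) hZ
  calc Z * 2 ^ (-α) * (2 * 2 ^ (-α)) ^ j
      = ∑ _k ∈ Ico (2 ^ j) (2 ^ (j + 1)), Z * ((2 : ℝ) ^ (-α)) ^ (j + 1) := by
        rw [sum_const, Nat.card_Ico, pow_succ 2 j, Nat.mul_two, Nat.add_sub_cancel, nsmul_eq_mul]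
        push_cast
        ring
    _ ≤ ∑ k ∈ Ico (2 ^ j) (2 ^ (j + 1)), ν.real {k} := sum_le_sum hterm
    _ = ν.real (Set.Ico (2 ^ j) (2 ^ (j + 1))) := by rw [sum_measureReal_singleton, coe_Ico]
    _ ≤ ν.real (Set.Ici (2 ^ j)) := measureReal_mono Set.Ico_subset_Ici_self

lemma eventually_exp_neg_mul_pow_le_half_pow {a ρ : ℝ} (ha : 0 < a) (hρ : 1 < ρ) :
    ∀ᶠ k : ℕ in atTop, exp (-(a * ρ ^ k)) ≤ (1 / 2) ^ k := by
  have hlog : 0 < log 2 := log_pos one_lt_two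
  filter_upwards [(isLittleO_coe_const_pow_of_one_lt (R := ℝ) hρ).bound (div_pos ha hlog)]
    with k hk
  rw [Real.norm_natCast, norm_of_nonneg (by positivity), div_mul_eq_mul_div,
    le_div_iff₀ hlog] at hk
  calc exp (-(a * ρ ^ k)) ≤ exp (-(k * log 2)) := exp_le_exp.2 (by linarith)
    _ = (1 / 2) ^ k := by rw [exp_neg, exp_nat_mul, exp_log two_pos, one_div, inv_pow]

lemma eventually_mul_pow_lt_mul_pow {r q b : ℝ} (C : ℝ) (hr : 0 ≤ r) (hrq : r < q)
    (hb : 0 < b) : ∀ᶠ K : ℕ in atTop, C * r ^ K < b * q ^ K := by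
  have hq : 0 < q := hr.trans_lt hrq
  have hlim : Tendsto (fun K : ℕ ↦ C * (r / q) ^ K) atTop (𝓝 0) := by
    simpa using (tendsto_pow_atTop_nhds_zero_of_lt_one (div_nonneg hr hq.le)
      ((div_lt_one hq).2 hrq)).const_mul C
  filter_upwards [hlim.eventually (gt_mem_nhds hb)] with K hK
  rwa [div_pow, ← mul_div_assoc, div_lt_iff₀ (by positivity)] at hK

lemma exists_dyadic_block_bounds {t : ℕ → ℝ} {c q : ℝ} (hc : 0 < c) (hq : 1 < 2 * q)
    (ht : ∀ j, c * q ^ j ≤ t (2 ^ j)) :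
    ∃ K, (∀ k, K ≤ k → exp (-(2 ^ k * t (2 ^ (k + 2)))) ≤ (1 / 2) ^ k) ∧
      2 * (1 / 2) ^ K < t (2 ^ (K + 1)) := by
  have hq0 : 0 < q := by linarith
  have hblocks : ∀ᶠ k : ℕ in atTop, exp (-(2 ^ k * t (2 ^ (k + 2)))) ≤ (1 / 2) ^ k := by
    filter_upwards [eventually_exp_neg_mul_pow_le_half_pow (mul_pos hc (pow_pos hq0 2)) hq]
      with k hk
    refine le_trans (exp_le_exp.2 (neg_le_neg ?_)) hk
    calc c * q ^ 2 * (2 * q) ^ k = 2 ^ k * (c * q ^ (k + 2)) := by ring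
      _ ≤ 2 ^ k * t (2 ^ (k + 2)) := by gcongr; exact ht _
  have hhead : ∀ᶠ K : ℕ in atTop, 2 * (1 / 2) ^ K < t (2 ^ (K + 1)) := by
    filter_upwards [eventually_mul_pow_lt_mul_pow 2 (by norm_num) (by linarith : (1 : ℝ) / 2 < q)
      (mul_pos hc hq0)] with K hK
    calc 2 * (1 / 2) ^ K < c * q * q ^ K := hK
      _ = c * q ^ (K + 1) := by ring
      _ ≤ t (2 ^ (K + 1)) := ht _
  exact ((eventually_forall_ge_atTop.2 hblocks).and hhead).exists

lemma tsum_le_ofReal_two_mul_half_pow {a : ℕ → ℝ≥0∞} {K : ℕ}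
    (ha : ∀ k, K ≤ k → a k ≤ ENNReal.ofReal ((1 / 2) ^ k)) :
    ∑' k, a (K + k) ≤ ENNReal.ofReal (2 * (1 / 2) ^ K) := by
  have hsum : Summable fun k ↦ ((1 : ℝ) / 2) ^ (K + k) := by
    simp_rw [pow_add]
    exact summable_geometric_two.mul_left _
  calc ∑' k, a (K + k) ≤ ∑' k, ENNReal.ofReal ((1 / 2) ^ (K + k)) :=
        ENNReal.tsum_le_tsum fun k ↦ ha _ (Nat.le_add_right K k)
    _ = ENNReal.ofReal (2 * (1 / 2) ^ K) := by
        rw [← ENNReal.ofReal_tsum_of_nonneg (fun _ ↦ by positivity) hsum]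
        simp_rw [pow_add]
        rw [tsum_mul_left, tsum_geometric_two, mul_comm]

section DyadicBlocks

variable {Ω : Type*}

def dyadicBlockFails (R : ℕ → Ω → ℕ) (k : ℕ) : Set Ω :=
  ⋂ i ∈ Ico (2 ^ k) (2 ^ (k + 1)), R i ⁻¹' {x | i + x < 2 ^ (k + 2)}

lemma diff_iUnion_dyadicBlockFails_subset (R : ℕ → Ω → ℕ) (K : ℕ) :
    {ω | 2 ^ (K + 1) ≤ R 0 ω} \ ⋃ k, dyadicBlockFails R (K + k) ⊆
      ⋂ (n : ℕ) (_ : 1 ≤ n), ⋃ i ∈ range n, {ω | n - i ≤ R i ω} := by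
  rintro ω ⟨h0, hblocks⟩
  simp only [Set.mem_iInter, Set.mem_iUnion, Set.mem_ofPred_eq, exists_prop]
  intro n hn
  refine exists_reach_of_dyadic_blocks (r := fun i ↦ R i ω) h0 (fun k hk ↦ ?_) hn
  by_contra! hfail
  refine hblocks (Set.mem_iUnion.2 ⟨k - K, ?_⟩)
  rw [Nat.add_sub_cancel' hk]
  simpa [dyadicBlockFails] using hfail

lemma measure_dyadicBlockFails_le [MeasurableSpace Ω] {P : Measure Ω} [IsProbabilityMeasure P]
    {R : ℕ → Ω → ℕ} {R₀ : Ω → ℕ} (hindep : iIndepFun R P)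
    (hid : ∀ i, IdentDistrib (R i) R₀ P P) (k : ℕ) :
    P (dyadicBlockFails R k) ≤
      ENNReal.ofReal (exp (-(2 ^ k * (P.map R₀).real (Set.Ici (2 ^ (k + 2)))))) := by
  have hR₀ : AEMeasurable R₀ P := (hid 0).aemeasurable_snd
  have : IsProbabilityMeasure (P.map R₀) := Measure.isProbabilityMeasure_map hR₀
  have hcard : #(Ico (2 ^ k) (2 ^ (k + 1))) = 2 ^ k := by simp [pow_succ]; omega
  calc P (dyadicBlockFails R k) ≤ P (R₀ ⁻¹' Set.Iio (2 ^ (k + 2))) ^ 2 ^ k := by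
        rw [← hcard]
        exact hindep.measure_biInter_preimage_le_pow hid _ (fun _ _ ↦ .of_discrete)
          (fun i _ x hx ↦ by simp only [Set.mem_ofPred_eq, Set.mem_Iio] at hx ⊢; omega)
          .of_discrete
    _ = (P.map R₀) (Set.Ici (2 ^ (k + 2)))ᶜ ^ 2 ^ k := by
        rw [Set.compl_Ici, Measure.map_apply_of_aemeasurable hR₀ .of_discrete]
    _ ≤ _ := mod_cast prob_compl_pow_le_exp measurableSet_Ici _

end DyadicBlocks

theorem firework_homogeneous_powerlaw_survival_general
    {Ω : Type*} [MeasurableSpace Ω] (P : Measure Ω) [IsProbabilityMeasure P]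
    (R : ℕ → Ω → ℕ) (R₀ : Ω → ℕ)
    (hindep : iIndepFun R P)
    (hid : ∀ i, IdentDistrib (R i) R₀ P P)
    (h0 : 0 < P {ω | R₀ ω < 1})
    (V : Set Ω)
    (hV : V = ⋂ (n : ℕ) (_ : 1 ≤ n), ⋃ i ∈ Finset.range n,
      {ω | n - i ≤ R i ω})
    (α : ℝ) (hα : 1 < α) (hα2 : α < 2)
    (Z : ℝ)
    (hpow : ∀ k : ℕ, (P {ω | R₀ ω = k}).toReal = Z * ((k : ℝ) + 1) ^ (-α)) :
    0 < P V := by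
  set ν := P.map R₀
  have hlaw : ∀ B : Set ℕ, P (R₀ ⁻¹' B) = ν B := fun B ↦
    (Measure.map_apply_of_aemeasurable (hid 0).aemeasurable_snd .of_discrete).symm
  have hν : ∀ k : ℕ, ν.real {k} = Z * ((k : ℝ) + 1) ^ (-α) := fun k ↦ by
    rw [measureReal_def, ← hlaw, ← hpow]; rfl
  have hZ : 0 < Z := by
    have hZ0 := hpow 0
    norm_num at hZ0
    have h00 : {ω | R₀ ω < 1} = {ω | R₀ ω = 0} := by ext; simp
    exact hZ0 ▸ ENNReal.toReal_pos (h00 ▸ h0).ne' (measure_ne_top _ _)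
  have hq : 1 < 2 * (2 * (2 : ℝ) ^ (-α)) := by
    have : (2 : ℝ) ^ (-2 : ℝ) < 2 ^ (-α) := rpow_lt_rpow_of_exponent_lt one_lt_two (by linarith)
    norm_num at this
    linarith
  obtain ⟨K, hblocks, hhead⟩ := exists_dyadic_block_bounds (t := fun m ↦ ν.real (Set.Ici m))
    (mul_pos hZ (by positivity)) hq (le_measureReal_Ici_two_pow_of_powerLaw hZ.le (by linarith) hν)
  have hfail : ∀ k, K ≤ k → P (dyadicBlockFails R k) ≤ ENNReal.ofReal ((1 / 2) ^ k) :=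
    fun k hk ↦ (measure_dyadicBlockFails_le hindep hid k).trans
      (ENNReal.ofReal_le_ofReal (hblocks k hk))
  have hsurvive : ∑' k, P (dyadicBlockFails R (K + k)) < P {ω | 2 ^ (K + 1) ≤ R 0 ω} := by
    rw [show {ω | 2 ^ (K + 1) ≤ R 0 ω} = R 0 ⁻¹' Set.Ici (2 ^ (K + 1)) from rfl,
      (hid 0).measure_mem_eq measurableSet_Ici, hlaw, ← ofReal_measureReal]
    exact (tsum_le_ofReal_two_mul_half_pow hfail).trans_lt
      ((ENNReal.ofReal_lt_ofReal_iff_of_nonneg (by positivity)).2 hhead)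
  calc 0 < P {ω | 2 ^ (K + 1) ≤ R 0 ω} - ∑' k, P (dyadicBlockFails R (K + k)) :=
        tsub_pos_of_lt hsurvive
    _ ≤ P ({ω | 2 ^ (K + 1) ≤ R 0 ω} \ ⋃ k, dyadicBlockFails R (K + k)) :=
        (tsub_le_tsub_left (measure_iUnion_le _) _).trans le_measure_sdiff
    _ ≤ P V := hV ▸ measure_mono (diff_iUnion_dyadicBlockFails_subset R K)

/-- **Homogeneous Firework Process with power-law radii.**
If `P(R = k) = Z_α (k+1)^{-α}` with `1 < α < 2`, then `P(V) > 0`. -/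
theorem firework_homogeneous_powerlaw_survival
    {Ω : Type*} [MeasurableSpace Ω] (P : Measure Ω) [IsProbabilityMeasure P]
    (R : ℕ → Ω → ℕ) (R₀ : Ω → ℕ)
    (hmeas : ∀ i, Measurable (R i)) (hmeas₀ : Measurable R₀)
    (hindep : iIndepFun R P)
    (hid : ∀ i, IdentDistrib (R i) R₀ P P)
    (h0 : 0 < P {ω | R₀ ω < 1}) (h1 : P {ω | R₀ ω < 1} < 1)
    (V : Set Ω)
    (hV : V = ⋂ (n : ℕ) (_ : 1 ≤ n), ⋃ i ∈ Finset.range n,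
      {ω | n - i ≤ R i ω})
    (α : ℝ) (hα : 1 < α) (hα2 : α < 2)
    (Z : ℝ) (hZ : Z = (∑' j : ℕ, ((j : ℝ) + 1) ^ (-α))⁻¹)
    (hpow : ∀ k : ℕ, (P {ω | R₀ ω = k}).toReal = Z * ((k : ℝ) + 1) ^ (-α)) :
    0 < P V :=
  firework_homogeneous_powerlaw_survival_general P R R₀ hindep hid h0 V hV α hα hα2 Z hpow
end

section
/- Consider the homogeneous Firework Process in which R has the power-law distribution P(R = k) = Z_α·(k+1)^{−α} for all k ∈ ℕ, where α > 1 and Z_α = ( ∑_{j=0}^{∞} (j+1)^{−α} )^{−1}. If α ≥ 2, then P(V) = 0. -/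
/-!
Let `E n` be the event that no vertex `i < n` reaches `n`, and `p n = P (E n) = ∏_{k < n} P(R ≤ k)`;
the process dies iff some `E (n + 1)` occurs. Splitting `E (t + 1)` according to the first `n`
with `E (n + 1)`, the radii beyond `n` are independent of that event and must still avoid `t + 1`,
so `p (t + 1) = ∑_{n ≤ t} P(first stop after n) p (t - n)`. Summing over `t < M` gives
`∑_{m ≤ M} p m ≤ 1 + P(death) ∑_{m ≤ M} p m`, i.e. `P(V) ∑_{m ≤ M} p m ≤ 1`, so `P(V) = 0` once
`∑ p m = ∞`. For the power law with `α ≥ 2`, comparing `(x + 1)^(-α)` with `1/x - 1/(x + 1)` gives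
`P(R ≥ k) ≤ Z / k`, hence `p (m + 1) ≥ Z / (m + 1)`, a divergent harmonic series.
-/

open MeasureTheory ProbabilityTheory Finset
open scoped ENNReal

lemma rpow_neg_le_inv_sub_inv {α x : ℝ} (hα : 2 ≤ α) (hx : 1 ≤ x) :
    (x + 1) ^ (-α) ≤ x⁻¹ - (x + 1)⁻¹ := by
  have hx0 : 0 < x := by linarith
  calc (x + 1) ^ (-α) ≤ (x + 1) ^ (-2 : ℝ) :=
        Real.rpow_le_rpow_of_exponent_le (by linarith) (by linarith)
    _ = ((x + 1) ^ 2)⁻¹ := by rw [Real.rpow_neg (by linarith)]; norm_cast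
    _ ≤ (x * (x + 1))⁻¹ := by gcongr; nlinarith
    _ = x⁻¹ - (x + 1)⁻¹ := by field_simp; ring

lemma tsum_rpow_neg_add_le {α x : ℝ} (hα : 2 ≤ α) (hx : 1 ≤ x) :
    ∑' j : ℕ, (x + j + 1) ^ (-α) ≤ x⁻¹ := by
  refine Real.tsum_le_of_sum_range_le (fun j => by positivity) fun n => ?_
  have hpos (j : ℕ) : 0 < x + j := by positivity
  calc ∑ j ∈ range n, (x + j + 1) ^ (-α)
      ≤ ∑ j ∈ range n, ((x + j)⁻¹ - (x + (j + 1 : ℕ))⁻¹) := by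
        gcongr with j
        rw [Nat.cast_succ, ← add_assoc]
        exact rpow_neg_le_inv_sub_inv hα (by linarith [j.cast_nonneg (α := ℝ)])
    _ = x⁻¹ - (x + n)⁻¹ := by rw [sum_range_sub' (fun j : ℕ => (x + j)⁻¹)]; simp
    _ ≤ x⁻¹ := by linarith [inv_pos.2 (hpos n)]

lemma tsum_ofReal_div_nat_succ_eq_top {Z : ℝ} (hZ : 0 < Z) :
    ∑' m : ℕ, ENNReal.ofReal (Z / (m + 1)) = ∞ := by
  by_contra h
  have hsum := (ENNReal.summable_toReal h).mul_left Z⁻¹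
  refine Real.not_summable_one_div_natCast ((summable_nat_add_iff 1).1 (hsum.congr fun m => ?_))
  rw [ENNReal.toReal_ofReal (by positivity)]
  push_cast
  field_simp

lemma ENNReal.mul_le_one_of_le_one_add_mul {a b s : ℝ≥0∞} (hab : a + b = 1) (hs : s ≠ ∞)
    (h : s ≤ 1 + b * s) : a * s ≤ 1 := by
  have hb : b ≠ ∞ := ne_top_of_le_ne_top ENNReal.one_ne_top (hab ▸ le_add_self)
  refine (ENNReal.add_le_add_iff_right (ENNReal.mul_ne_top hb hs)).1 ?_
  rwa [← add_mul, hab, one_mul]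

lemma measure_le_eq_tsum {Ω : Type*} [MeasurableSpace Ω] {X : Ω → ℕ} (hX : Measurable X)
    (μ : Measure Ω) (k : ℕ) :
    μ {ω | k ≤ X ω} = ∑' j, μ {ω | X ω = k + j} := by
  have hunion : {ω | k ≤ X ω} = ⋃ j : ℕ, {ω | X ω = k + j} := by
    ext ω
    simp only [Set.mem_ofPred_eq, Set.mem_iUnion]
    exact ⟨fun h => ⟨X ω - k, by omega⟩, fun ⟨j, hj⟩ => by omega⟩
  refine hunion ▸ measure_iUnion (fun i j hij => ?_) fun j => hX (measurableSet_singleton (k + j))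
  exact Set.disjoint_left.2 fun ω hi hj => hij (by simp_all)

section PowerLaw

variable {Ω : Type*} [MeasurableSpace Ω] {μ : Measure Ω} {X : Ω → ℕ} {α Z : ℝ}

def IsPowerLaw (μ : Measure Ω) (X : Ω → ℕ) (α Z : ℝ) : Prop :=
  ∀ k : ℕ, (μ {ω | X ω = k}).toReal = Z * ((k : ℝ) + 1) ^ (-α)

lemma IsPowerLaw.toReal_measure_lt_one (h : IsPowerLaw μ X α Z) :
    (μ {ω | X ω < 1}).toReal = Z := by
  simpa [Nat.lt_one_iff] using h 0

variable [IsProbabilityMeasure μ]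

lemma IsPowerLaw.toReal_measure_le_le (h : IsPowerLaw μ X α Z) (hX : Measurable X)
    (hα : 2 ≤ α) {k : ℕ} (hk : 1 ≤ k) :
    (μ {ω | k ≤ X ω}).toReal ≤ Z / k := by
  have hZ : 0 ≤ Z := h.toReal_measure_lt_one ▸ ENNReal.toReal_nonneg
  rw [measure_le_eq_tsum hX, ENNReal.tsum_toReal_eq fun _ => measure_ne_top _ _]
  rw [IsPowerLaw] at h
  simp_rw [h]
  push_cast
  rw [tsum_mul_left, div_eq_mul_inv]
  exact mul_le_mul_of_nonneg_left (tsum_rpow_neg_add_le hα (by exact_mod_cast hk)) hZ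

lemma IsPowerLaw.ofReal_div_succ_le_measure_lt_succ (h : IsPowerLaw μ X α Z)
    (hX : Measurable X) (hα : 2 ≤ α) (k : ℕ) :
    ENNReal.ofReal (k / (k + 1)) ≤ μ {ω | X ω < k + 1} := by
  have hZ : Z ≤ 1 := h.toReal_measure_lt_one ▸ measureReal_le_one
  have hcompl : {ω | X ω < k + 1} = {ω | k + 1 ≤ X ω}ᶜ := by ext; simp
  refine ENNReal.ofReal_le_of_le_toReal ?_
  rw [← measureReal_def, hcompl, probReal_compl_eq_one_sub (measurableSet_le measurable_const hX),
    measureReal_def]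
  have htail := h.toReal_measure_le_le hX hα (Nat.le_add_left 1 k)
  have : Z / ((k + 1 : ℕ) : ℝ) ≤ 1 / (k + 1) := by push_cast; gcongr
  calc (k : ℝ) / (k + 1) = 1 - 1 / (k + 1) := by field_simp; ring
    _ ≤ _ := by linarith

lemma IsPowerLaw.ofReal_div_succ_le_prod_measure_lt_succ (h : IsPowerLaw μ X α Z)
    (hX : Measurable X) (hα : 2 ≤ α) (m : ℕ) :
    ENNReal.ofReal (Z / (m + 1)) ≤ ∏ k ∈ range (m + 1), μ {ω | X ω < k + 1} := by
  induction m with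
  | zero => simp [← h.toReal_measure_lt_one]
  | succ m ih =>
    have hZ : 0 ≤ Z := h.toReal_measure_lt_one ▸ ENNReal.toReal_nonneg
    have hsplit : ENNReal.ofReal (Z / ((m + 1 : ℕ) + 1))
        = ENNReal.ofReal (Z / (m + 1)) * ENNReal.ofReal ((m + 1 : ℕ) / ((m + 1 : ℕ) + 1)) := by
      rw [← ENNReal.ofReal_mul (by positivity)]
      congr 1
      push_cast
      field_simp
    rw [hsplit, prod_range_succ]
    exact mul_le_mul' ih (h.ofReal_div_succ_le_measure_lt_succ hX hα _)

lemma IsPowerLaw.tsum_prod_measure_lt_succ_eq_top (h : IsPowerLaw μ X α Z) (hX : Measurable X)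
    (hα : 2 ≤ α) (hZ : 0 < Z) :
    ∑' m, ∏ k ∈ range m, μ {ω | X ω < k + 1} = ∞ := by
  refine top_unique ?_
  calc ∞ = ∑' m : ℕ, ENNReal.ofReal (Z / (m + 1)) := (tsum_ofReal_div_nat_succ_eq_top hZ).symm
    _ ≤ ∑' m, ∏ k ∈ range (m + 1), μ {ω | X ω < k + 1} :=
      ENNReal.tsum_le_tsum (h.ofReal_div_succ_le_prod_measure_lt_succ hX hα)
    _ ≤ ∑' m, ∏ k ∈ range m, μ {ω | X ω < k + 1} :=
      ENNReal.tsum_comp_le_tsum_of_injective Nat.succ_injective _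

end PowerLaw

namespace FireworkProcess

variable {Ω : Type*} (R : ℕ → Ω → ℕ)

/-- For `a = 0`: the process dies before activating `n`. -/
def notReachedFrom (a n : ℕ) : Set Ω := ⋂ i ∈ Ico a n, {ω | R i ω < n - i}

/-- The activated vertices are exactly `0, …, n`. -/
def extinctAfter (n : ℕ) : Set Ω :=
  notReachedFrom R 0 (n + 1) \ ⋃ (k) (_ : k < n), notReachedFrom R 0 (k + 1)

def extinct : Set Ω := ⋃ n, notReachedFrom R 0 (n + 1)

variable {R}

lemma mem_notReachedFrom {a n : ℕ} {ω : Ω} :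
    ω ∈ notReachedFrom R a n ↔ ∀ i, a ≤ i → i < n → R i ω < n - i := by
  simp [notReachedFrom]

lemma notReachedFrom_zero_inter_eq {b n : ℕ} (hbn : b ≤ n) :
    notReachedFrom R 0 b ∩ notReachedFrom R 0 n = notReachedFrom R 0 b ∩ notReachedFrom R b n := by
  ext ω
  simp only [Set.mem_inter_iff, mem_notReachedFrom, and_congr_right_iff]
  intro hb
  refine ⟨fun h i _ hi => h i (Nat.zero_le i) hi, fun h i _ hi => ?_⟩
  by_cases hib : i < b
  · have := hb i (Nat.zero_le i) hib
    omega
  · exact h i (by omega) hi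

lemma pairwise_disjoint_extinctAfter : Pairwise (Function.onFun Disjoint (extinctAfter R)) := by
  refine pairwise_disjoint_on _ |>.2 fun a b hab => Set.disjoint_left.2 fun ω ha hb => ?_
  exact hb.2 (Set.mem_biUnion hab ha.1)

lemma notReachedFrom_zero_subset_biUnion_extinctAfter (t : ℕ) :
    notReachedFrom R 0 (t + 1) ⊆ ⋃ n ∈ range (t + 1), extinctAfter R n := by
  classical
  intro ω hω
  have hex : ∃ k, ω ∈ notReachedFrom R 0 (k + 1) := ⟨t, hω⟩
  refine Set.mem_biUnion (x := Nat.find hex) (mem_range.2 (Nat.lt_succ_of_le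
    (Nat.find_min' hex hω))) ⟨Nat.find_spec hex, ?_⟩
  simp only [Set.mem_iUnion, not_exists]
  exact fun k hk => Nat.find_min hex hk

lemma extinctAfter_subset_extinct (n : ℕ) : extinctAfter R n ⊆ extinct R :=
  Set.sdiff_subset.trans (Set.subset_iUnion (fun n => notReachedFrom R 0 (n + 1)) n)

lemma compl_extinct :
    (extinct R)ᶜ = ⋂ (n : ℕ) (_ : 1 ≤ n), ⋃ i ∈ range n, {ω | n - i ≤ R i ω} := by
  ext ω
  simp only [extinct, Set.mem_compl_iff, Set.mem_iUnion, mem_notReachedFrom, Set.mem_iInter,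
    mem_range, not_exists]
  refine ⟨fun h n hn => ?_, fun h n hn => ?_⟩
  · obtain ⟨i, hi, hR⟩ : ∃ i, i < n - 1 + 1 ∧ n - 1 + 1 - i ≤ R i ω := by simpa using h (n - 1)
    exact ⟨i, by omega, by simpa [Nat.sub_add_cancel hn] using hR⟩
  · obtain ⟨i, hi, hR⟩ := h (n + 1) n.succ_pos
    exact absurd (hn i i.zero_le hi) (by simpa using hR)

lemma measurableSet_notReachedFrom {m : MeasurableSpace Ω} {a n : ℕ}
    (hm : ∀ i, a ≤ i → i < n → MeasurableSpace.comap (R i) inferInstance ≤ m) :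
    MeasurableSet[m] (notReachedFrom R a n) :=
  Finset.measurableSet_biInter _ fun i hi =>
    hm i (mem_Ico.1 hi).1 (mem_Ico.1 hi).2 _ ⟨Set.Iio _, measurableSet_Iio, rfl⟩

lemma measurableSet_extinctAfter {m : MeasurableSpace Ω} {n : ℕ}
    (hm : ∀ i ≤ n, MeasurableSpace.comap (R i) inferInstance ≤ m) :
    MeasurableSet[m] (extinctAfter R n) :=
  (measurableSet_notReachedFrom fun i _ hi => hm i (Nat.le_of_lt_succ hi)).diff <|
    .iUnion fun _ => .iUnion fun hk => measurableSet_notReachedFrom fun i _ hi => hm i (by omega)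

section Probability

variable [MeasurableSpace Ω] {P : Measure Ω} {R₀ : Ω → ℕ}

lemma measure_notReachedFrom (hindep : iIndepFun R P) (hid : ∀ i, IdentDistrib (R i) R₀ P P)
    (a n : ℕ) : P (notReachedFrom R a n) = ∏ k ∈ range (n - a), P {ω | R₀ ω < k + 1} := by
  rw [notReachedFrom, hindep.meas_biInter (S := Ico a n) (s := fun i => {ω | R i ω < n - i})
    fun i _ => ⟨Set.Iio _, measurableSet_Iio, rfl⟩, prod_Ico_eq_prod_range, ← prod_range_reflect]
  refine prod_congr rfl fun j hj => ?_
  have hj := mem_range.1 hj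
  have hshift : n - (a + (n - a - 1 - j)) = j + 1 := by omega
  rw [hshift]
  exact (hid _).measure_mem_eq measurableSet_Iio

lemma measure_extinctAfter_inter_notReachedFrom (hmeas : ∀ i, Measurable (R i))
    (hindep : iIndepFun R P) (hid : ∀ i, IdentDistrib (R i) R₀ P P) {n N : ℕ} (hnN : n < N) :
    P (extinctAfter R n ∩ notReachedFrom R 0 N) =
      P (extinctAfter R n) * P (notReachedFrom R 0 (N - (n + 1))) := by
  have hsub : extinctAfter R n ⊆ notReachedFrom R 0 (n + 1) := Set.sdiff_subset
  have hrestart : extinctAfter R n ∩ notReachedFrom R 0 N =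
      extinctAfter R n ∩ notReachedFrom R (n + 1) N := by
    rw [← Set.inter_eq_left.2 hsub, Set.inter_assoc, Set.inter_assoc,
      notReachedFrom_zero_inter_eq hnN]
  have hsplit := indep_iSup_of_disjoint (fun i => (hmeas i).comap_le) hindep.iIndep
    (Set.Iic_disjoint_Ioi le_rfl : Disjoint (Set.Iic n) (Set.Ioi n))
  rw [hrestart, (Indep_iff _ _ _).1 hsplit _ _
    (measurableSet_extinctAfter fun i hi => le_iSup₂ (f := fun i (_ : i ∈ Set.Iic n) =>
      MeasurableSpace.comap (R i) inferInstance) i hi)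
    (measurableSet_notReachedFrom fun i hi _ => le_iSup₂ (f := fun i (_ : i ∈ Set.Ioi n) =>
      MeasurableSpace.comap (R i) inferInstance) i hi),
    measure_notReachedFrom hindep hid, measure_notReachedFrom hindep hid, Nat.sub_zero]

lemma measure_notReachedFrom_zero_succ (hmeas : ∀ i, Measurable (R i))
    (hindep : iIndepFun R P) (hid : ∀ i, IdentDistrib (R i) R₀ P P) (t : ℕ) :
    P (notReachedFrom R 0 (t + 1)) =
      ∑ n ∈ range (t + 1), P (extinctAfter R n) * P (notReachedFrom R 0 (t - n)) := by
  have hmeasE (n : ℕ) : MeasurableSet (extinctAfter R n) :=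
    measurableSet_extinctAfter fun i _ => (hmeas i).comap_le
  calc P (notReachedFrom R 0 (t + 1))
      = P (⋃ n ∈ range (t + 1), extinctAfter R n ∩ notReachedFrom R 0 (t + 1)) := by
        rw [← Set.iUnion₂_inter, Set.inter_eq_right.2
          (notReachedFrom_zero_subset_biUnion_extinctAfter t)]
    _ = ∑ n ∈ range (t + 1), P (extinctAfter R n ∩ notReachedFrom R 0 (t + 1)) :=
        measure_biUnion_finset (fun a _ b _ hab => (pairwise_disjoint_extinctAfter hab).mono
          Set.inter_subset_left Set.inter_subset_left)
          fun n _ => (hmeasE n).inter (measurableSet_notReachedFrom fun i _ _ => (hmeas i).comap_le)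
    _ = ∑ n ∈ range (t + 1), P (extinctAfter R n) * P (notReachedFrom R 0 (t - n)) := by
        refine sum_congr rfl fun n hn => ?_
        rw [measure_extinctAfter_inter_notReachedFrom hmeas hindep hid (mem_range.1 hn),
          Nat.add_sub_add_right]

lemma sum_range_measure_notReachedFrom_succ_le (hmeas : ∀ i, Measurable (R i))
    (hindep : iIndepFun R P) (hid : ∀ i, IdentDistrib (R i) R₀ P P) (M : ℕ) :
    ∑ t ∈ range M, P (notReachedFrom R 0 (t + 1)) ≤
      P (extinct R) * ∑ m ∈ range M, P (notReachedFrom R 0 m) := by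
  have hmeasE (n : ℕ) : MeasurableSet (extinctAfter R n) :=
    measurableSet_extinctAfter fun i _ => (hmeas i).comap_le
  calc ∑ t ∈ range M, P (notReachedFrom R 0 (t + 1))
      = ∑ t ∈ range M, ∑ n ∈ range (t + 1),
          P (extinctAfter R n) * P (notReachedFrom R 0 (t - n)) :=
        sum_congr rfl fun t _ => measure_notReachedFrom_zero_succ hmeas hindep hid t
    _ = ∑ n ∈ range M, ∑ j ∈ range (M - n), P (extinctAfter R n) * P (notReachedFrom R 0 j) :=
        sum_range_diag_flip M fun n j => P (extinctAfter R n) * P (notReachedFrom R 0 j)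
    _ ≤ ∑ n ∈ range M, P (extinctAfter R n) * ∑ m ∈ range M, P (notReachedFrom R 0 m) := by
        refine sum_le_sum fun n _ => ?_
        rw [← mul_sum]
        gcongr
        exact Nat.sub_le M n
    _ = P (⋃ n ∈ range M, extinctAfter R n) * ∑ m ∈ range M, P (notReachedFrom R 0 m) := by
        rw [← sum_mul, measure_biUnion_finset
          (fun a _ b _ hab => pairwise_disjoint_extinctAfter hab) fun n _ => hmeasE n]
    _ ≤ P (extinct R) * ∑ m ∈ range M, P (notReachedFrom R 0 m) := by
        gcongr
        exact Set.iUnion₂_subset fun n _ => extinctAfter_subset_extinct n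

variable [IsProbabilityMeasure P]

lemma measure_compl_extinct_mul_sum_range_le_one (hmeas : ∀ i, Measurable (R i))
    (hindep : iIndepFun R P) (hid : ∀ i, IdentDistrib (R i) R₀ P P) (M : ℕ) :
    P (extinct R)ᶜ * ∑ m ∈ range M, P (notReachedFrom R 0 m) ≤ 1 := by
  have hE : MeasurableSet (extinct R) :=
    .iUnion fun _ => measurableSet_notReachedFrom fun i _ _ => (hmeas i).comap_le
  have hmono : ∑ m ∈ range M, P (notReachedFrom R 0 m) ≤
      ∑ m ∈ range (M + 1), P (notReachedFrom R 0 m) :=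
    sum_le_sum_of_subset (range_subset_range.2 M.le_succ)
  refine (mul_le_mul_right hmono _).trans (ENNReal.mul_le_one_of_le_one_add_mul
    ((add_comm _ _).trans (prob_add_prob_compl hE))
    (ENNReal.sum_ne_top.2 fun _ _ => measure_ne_top _ _) ?_)
  calc ∑ m ∈ range (M + 1), P (notReachedFrom R 0 m)
      = ∑ t ∈ range M, P (notReachedFrom R 0 (t + 1)) + 1 := by
        simp [sum_range_succ', notReachedFrom]
    _ ≤ P (extinct R) * ∑ m ∈ range M, P (notReachedFrom R 0 m) + 1 := by
        gcongr
        exact sum_range_measure_notReachedFrom_succ_le hmeas hindep hid M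
    _ ≤ 1 + P (extinct R) * ∑ m ∈ range (M + 1), P (notReachedFrom R 0 m) := by
        rw [add_comm]
        gcongr

lemma measure_compl_extinct_eq_zero (hmeas : ∀ i, Measurable (R i))
    (hindep : iIndepFun R P) (hid : ∀ i, IdentDistrib (R i) R₀ P P)
    (hdiv : ∑' m, P (notReachedFrom R 0 m) = ∞) : P (extinct R)ᶜ = 0 := by
  have h : P (extinct R)ᶜ * ∑' m, P (notReachedFrom R 0 m) ≤ 1 := by
    rw [ENNReal.tsum_eq_iSup_nat, ENNReal.mul_iSup]
    exact iSup_le (measure_compl_extinct_mul_sum_range_le_one hmeas hindep hid)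
  by_contra hpos
  rw [hdiv, ENNReal.mul_top hpos] at h
  exact ENNReal.one_ne_top (top_le_iff.1 h)

end Probability

end FireworkProcess

theorem firework_homogeneous_powerlaw_death_general
    {Ω : Type*} [MeasurableSpace Ω] (P : Measure Ω) [IsProbabilityMeasure P]
    (R : ℕ → Ω → ℕ) (R₀ : Ω → ℕ)
    (hmeas : ∀ i, Measurable (R i)) (hmeas₀ : Measurable R₀)
    (hindep : iIndepFun R P)
    (hid : ∀ i, IdentDistrib (R i) R₀ P P)
    (h0 : 0 < P {ω | R₀ ω < 1})
    (V : Set Ω)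
    (hV : V = ⋂ (n : ℕ) (_ : 1 ≤ n), ⋃ i ∈ Finset.range n,
      {ω | n - i ≤ R i ω})
    (α : ℝ) (hα2 : 2 ≤ α)
    (Z : ℝ)
    (hpow : ∀ k : ℕ, (P {ω | R₀ ω = k}).toReal = Z * ((k : ℝ) + 1) ^ (-α)) :
    P V = 0 := by
  have hZ : 0 < Z :=
    IsPowerLaw.toReal_measure_lt_one hpow ▸ ENNReal.toReal_pos h0.ne' (measure_ne_top _ _)
  rw [hV, ← FireworkProcess.compl_extinct]
  refine FireworkProcess.measure_compl_extinct_eq_zero hmeas hindep hid ?_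
  simp_rw [FireworkProcess.measure_notReachedFrom hindep hid, Nat.sub_zero]
  exact IsPowerLaw.tsum_prod_measure_lt_succ_eq_top hpow hmeas₀ hα2 hZ

/-- **Homogeneous Firework Process with power-law radii.**
If `P(R = k) = Z_α (k+1)^{-α}` with `α ≥ 2`, then `P(V) = 0`. -/
theorem firework_homogeneous_powerlaw_death
    {Ω : Type*} [MeasurableSpace Ω] (P : Measure Ω) [IsProbabilityMeasure P]
    (R : ℕ → Ω → ℕ) (R₀ : Ω → ℕ)
    (hmeas : ∀ i, Measurable (R i)) (hmeas₀ : Measurable R₀)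
    (hindep : iIndepFun R P)
    (hid : ∀ i, IdentDistrib (R i) R₀ P P)
    (h0 : 0 < P {ω | R₀ ω < 1}) (h1 : P {ω | R₀ ω < 1} < 1)
    (V : Set Ω)
    (hV : V = ⋂ (n : ℕ) (_ : 1 ≤ n), ⋃ i ∈ Finset.range n,
      {ω | n - i ≤ R i ω})
    (α : ℝ) (hα : 1 < α) (hα2 : 2 ≤ α)
    (Z : ℝ) (hZ : Z = (∑' j : ℕ, ((j : ℝ) + 1) ^ (-α))⁻¹)
    (hpow : ∀ k : ℕ, (P {ω | R₀ ω = k}).toReal = Z * ((k : ℝ) + 1) ^ (-α)) :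
    P V = 0 :=
  firework_homogeneous_powerlaw_death_general P R R₀ hmeas hmeas₀ hindep hid h0 V hV α hα2 Z hpow
end

section
/- For the heterogeneous Firework Process, if there exists an integer t ≥ 1 such that ∑_{n=0}^{∞} [ P(R_n < t·m) ]^t < ∞, then P(V) > 0. -/
/-!
Let `c = t·m` and call an index `j` big when `R j ≥ c`. By independence a window of `t`
consecutive non-big indices has probability `∏ P(R_j < c) ≤ ∑ P(R_j < c)^t`, so the window
probabilities are summable, and for `M` large enough, with positive probability every window
starting after `M` contains a big index. Independently of this, with positive probability
`R_i ≥ m` for `i < M` and `R_M ≥ c`. On the intersection the process survives, because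
`u_n - u_i ≤ (n - i)·m`: vertex `u_n` is reached from `u_{n-1}` when `n ≤ M`, from `u_M` when
`n ≤ M + t`, and otherwise from a big index among the `t` preceding ones.
-/

open MeasureTheory ProbabilityTheory Filter
open scoped ENNReal

theorem Finset.prod_le_sum_pow_card {ι N : Type*} [CommSemiring N] [LinearOrder N]
    [CanonicallyOrderedAdd N] [MulLeftMono N] {s : Finset ι} (hs : s.Nonempty) (f : ι → N) :
    ∏ i ∈ s, f i ≤ ∑ i ∈ s, f i ^ s.card := by
  obtain ⟨j, hj, hmax⟩ := s.exists_max_image f hs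
  calc ∏ i ∈ s, f i ≤ f j ^ s.card := s.prod_le_pow_card f (f j) hmax
    _ ≤ ∑ i ∈ s, f i ^ s.card :=
        Finset.single_le_sum (f := fun i => f i ^ s.card) (fun _ _ => zero_le) hj

theorem ENNReal.tsum_sum_range_add_le (f : ℕ → ℝ≥0∞) (t : ℕ) :
    ∑' n, ∑ d ∈ Finset.range t, f (n + d) ≤ t * ∑' n, f n := by
  rw [Summable.tsum_finsetSum fun _ _ => ENNReal.summable]
  calc ∑ d ∈ Finset.range t, ∑' n, f (n + d) ≤ ∑ _d ∈ Finset.range t, ∑' n, f n :=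
        Finset.sum_le_sum fun d _ =>
          ENNReal.tsum_comp_le_tsum_of_injective (add_left_injective d) f
    _ = t * ∑' n, f n := by rw [Finset.sum_const, Finset.card_range, nsmul_eq_mul]

theorem Nat.sub_le_sub_mul_of_forall_succ_sub_le {u : ℕ → ℕ} {m : ℕ}
    (hstep : ∀ n, u (n + 1) - u n ≤ m) {i n : ℕ} (hin : i ≤ n) :
    u n - u i ≤ (n - i) * m := by
  induction n, hin using Nat.le_induction with
  | base => simp
  | succ n hin ih =>
    have := hstep n
    rw [Nat.sub_add_comm hin, Nat.succ_mul]
    omega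

namespace MeasureTheory

variable {Ω : Type*} [MeasurableSpace Ω] {P : Measure Ω}

theorem measure_pos_of_measure_compl_lt_one [IsProbabilityMeasure P] {s : Set Ω}
    (h : P sᶜ < 1) : 0 < P s := by
  have := measure_univ_le_add_compl s (μ := P)
  rw [measure_univ] at this
  contrapose! h
  simpa [nonpos_iff_eq_zero.mp h] using this

theorem eventually_measure_iInter_compl_add_pos [IsProbabilityMeasure P] {B : ℕ → Set Ω}
    (hB : ∑' n, P (B n) ≠ ∞) : ∀ᶠ N in atTop, 0 < P (⋂ k, (B (k + N))ᶜ) := by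
  filter_upwards [(ENNReal.tendsto_sum_nat_add _ hB).eventually_lt_const zero_lt_one]
    with N hN
  refine measure_pos_of_measure_compl_lt_one ?_
  simp_rw [Set.compl_iInter, compl_compl]
  exact (measure_iUnion_le _).trans_lt hN

end MeasureTheory

namespace ProbabilityTheory

theorem measurableSet_biSup_comap_preimage {Ω ι β : Type*} [mβ : MeasurableSpace β]
    {X : ι → Ω → β} {S : Set ι} {i : ι} (hi : i ∈ S) {s : Set β} (hs : MeasurableSet s) :
    MeasurableSet[⨆ j ∈ S, mβ.comap (X j)] (X i ⁻¹' s) :=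
  le_biSup (fun j => mβ.comap (X j)) hi _ ⟨s, hs, rfl⟩

variable {Ω ι β : Type*} [MeasurableSpace Ω] {P : Measure Ω} [mβ : MeasurableSpace β]
  {X : ι → Ω → β}

theorem iIndepSet.tsum_measure_biInter_range_add_ne_top {E : ℕ → Set Ω} (hE : iIndepSet E P)
    {t : ℕ} (ht : 1 ≤ t) (hsum : ∑' n, P (E n) ^ t ≠ ∞) :
    ∑' n, P (⋂ d ∈ Finset.range t, E (n + d)) ≠ ∞ := by
  have hwindow : ∀ n, P (⋂ d ∈ Finset.range t, E (n + d))
      ≤ ∑ d ∈ Finset.range t, P (E (n + d)) ^ t := by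
    intro n
    have := Finset.prod_le_sum_pow_card ⟨0, Finset.mem_range.2 ht⟩
      fun d => P (E (n + d))
    rw [Finset.card_range] at this
    exact ((hE.precomp (add_right_injective n)).meas_biInter _).trans_le this
  refine ne_top_of_le_ne_top (ENNReal.mul_ne_top (ENNReal.natCast_ne_top t) hsum) ?_
  exact (ENNReal.tsum_le_tsum hwindow).trans
    (ENNReal.tsum_sum_range_add_le (fun n => P (E n) ^ t) t)

theorem iIndepSet.exists_measure_lt_one_and_measure_iInter_compl_window_pos {E : ℕ → Set Ω}
    (hE : iIndepSet E P) {t : ℕ} (ht : 1 ≤ t) (hsum : ∑' n, P (E n) ^ t ≠ ∞) :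
    ∃ M, P (E M) < 1 ∧ 0 < P (⋂ k, (⋂ d ∈ Finset.range t, E (k + (M + 1) + d))ᶜ) := by
  have := hE.isProbabilityMeasure
  have hlt : ∀ᶠ n in atTop, P (E n) < 1 := by
    filter_upwards [(ENNReal.tendsto_atTop_zero_of_tsum_ne_top hsum).eventually_lt_const
      zero_lt_one] with n hn
    exact lt_of_not_ge fun h => hn.not_ge (one_le_pow_of_one_le' h t)
  have htail := eventually_measure_iInter_compl_add_pos
    (hE.tsum_measure_biInter_range_add_ne_top ht hsum)
  exact (hlt.and ((tendsto_add_atTop_nat 1).eventually htail)).exists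

theorem iIndepFun.iIndepSet_preimage (hX : iIndepFun X P) (hmeas : ∀ i, Measurable (X i))
    {s : Set β} (hs : MeasurableSet s) : iIndepSet (fun i => X i ⁻¹' s) P :=
  (iIndepSet_iff_meas_biInter fun i => hmeas i hs).2 fun S =>
    hX.measure_inter_preimage_eq_mul S fun _ _ => hs

theorem iIndepFun.measure_biInter_preimage_pos (hX : iIndepFun X P) (S : Finset ι)
    {sets : ι → Set β} (hs : ∀ i ∈ S, MeasurableSet (sets i))
    (hpos : ∀ i ∈ S, 0 < P (X i ⁻¹' sets i)) : 0 < P (⋂ i ∈ S, X i ⁻¹' sets i) := by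
  rw [hX.measure_inter_preimage_eq_mul S hs]
  exact CanonicallyOrderedAdd.prod_pos.2 hpos

theorem iIndepFun.measure_inter_eq_mul_of_measurableSet_biSup (hX : iIndepFun X P)
    (hmeas : ∀ i, Measurable (X i)) (S : Set ι) {A C : Set Ω}
    (hA : MeasurableSet[⨆ i ∈ S, mβ.comap (X i)] A)
    (hC : MeasurableSet[⨆ i ∈ Sᶜ, mβ.comap (X i)] C) : P (A ∩ C) = P A * P C :=
  (Indep_iff _ _ _).1 (indep_biSup_compl (fun i => (hmeas i).comap_le) hX S) A C hA hC

theorem iIndepFun.measure_biInter_preimage_inter_pos {X : ℕ → Ω → β} (hX : iIndepFun X P)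
    (hmeas : ∀ i, Measurable (X i)) {M : ℕ} {sets : ℕ → Set β}
    (hs : ∀ i, MeasurableSet (sets i)) (hpos : ∀ i ∈ Finset.Iic M, 0 < P (X i ⁻¹' sets i))
    {C : Set Ω} (hC : MeasurableSet[⨆ i ∈ (Set.Iic M)ᶜ, mβ.comap (X i)] C) (hCpos : 0 < P C) :
    0 < P ((⋂ i ∈ Finset.Iic M, X i ⁻¹' sets i) ∩ C) := by
  have hA : MeasurableSet[⨆ i ∈ Set.Iic M, mβ.comap (X i)] (⋂ i ∈ Finset.Iic M, X i ⁻¹' sets i) :=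
    .biInter (Set.to_countable _) fun i hi =>
      measurableSet_biSup_comap_preimage (by simpa using hi) (hs i)
  rw [hX.measure_inter_eq_mul_of_measurableSet_biSup hmeas _ hA hC]
  exact ENNReal.mul_pos (hX.measure_biInter_preimage_pos _ (fun i _ => hs i) hpos).ne' hCpos.ne'

end ProbabilityTheory

theorem exists_lt_sub_mul_le_of_forall_window {r : ℕ → ℝ} {m t M : ℕ}
    (hsmall : ∀ i < M, (m : ℝ) ≤ r i) (hM : ((t * m : ℕ) : ℝ) ≤ r M)
    (hwindow : ∀ k, ∃ d < t, ((t * m : ℕ) : ℝ) ≤ r (k + (M + 1) + d)) {n : ℕ} (hn : 1 ≤ n) :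
    ∃ i < n, (((n - i) * m : ℕ) : ℝ) ≤ r i := by
  rcases Nat.lt_or_ge M n with hMn | hnM
  · rcases Nat.lt_or_ge (M + t) n with hfar | hnear
    · obtain ⟨d, hd, hr⟩ := hwindow (n - t - (M + 1))
      have hj : n - t - (M + 1) + (M + 1) + d = n - t + d := by omega
      refine ⟨n - t + d, by omega, le_trans ?_ (hj ▸ hr)⟩
      exact_mod_cast Nat.mul_le_mul_right m (by omega)
    · exact ⟨M, hMn, le_trans (by exact_mod_cast Nat.mul_le_mul_right m (by omega)) hM⟩
  · refine ⟨n - 1, by omega, ?_⟩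
    simpa [show n - (n - 1) = 1 by omega] using hsmall (n - 1) (by omega)

theorem exists_lt_sub_le_of_forall_window {u : ℕ → ℕ} {m t M : ℕ}
    (hstep : ∀ n, u (n + 1) - u n ≤ m) {r : ℕ → ℝ}
    (hsmall : ∀ i < M, (m : ℝ) ≤ r i) (hM : ((t * m : ℕ) : ℝ) ≤ r M)
    (hwindow : ∀ k, ∃ d < t, ((t * m : ℕ) : ℝ) ≤ r (k + (M + 1) + d)) {n : ℕ} (hn : 1 ≤ n) :
    ∃ i < n, ((u n - u i : ℕ) : ℝ) ≤ r i := by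
  obtain ⟨i, hin, hi⟩ := exists_lt_sub_mul_le_of_forall_window hsmall hM hwindow hn
  exact ⟨i, hin, le_trans (by exact_mod_cast
    Nat.sub_le_sub_mul_of_forall_succ_sub_le hstep hin.le) hi⟩

theorem firework_heterogeneous_survival_criterion_power_general
    {Ω : Type*} [MeasurableSpace Ω] (P : Measure Ω) [IsProbabilityMeasure P]
    (m : ℕ)
    (u : ℕ → ℕ)
    (hustep : ∀ n, u (n + 1) - u n ≤ m)
    (R : ℕ → Ω → ℝ)
    (hmeas : ∀ i, Measurable (R i))
    (hindep : iIndepFun R P)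
    (h1 : ∀ n, P {ω | R n ω < (m : ℝ)} < 1)
    (V : Set Ω)
    (hV : V = ⋂ (n : ℕ) (_ : 1 ≤ n), ⋃ i ∈ Finset.range n,
      {ω | ((u n - u i : ℕ) : ℝ) ≤ R i ω})
    (ht : ∃ t : ℕ, 1 ≤ t ∧
      (∑' n : ℕ, (P {ω | R n ω < ((t * m : ℕ) : ℝ)}) ^ t) ≠ ⊤) :
    0 < P V := by
  obtain ⟨t, ht1, htsum⟩ := ht
  set c : ℝ := ((t * m : ℕ) : ℝ)
  obtain ⟨M, hM, hC⟩ := (hindep.iIndepSet_preimage hmeas (measurableSet_Iio (a := c))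
    ).exists_measure_lt_one_and_measure_iInter_compl_window_pos ht1 htsum
  set thr : ℕ → ℝ := fun i => if i < M then m else c
  have hthr : ∀ i ∈ Finset.Iic M, 0 < P (R i ⁻¹' Set.Ici (thr i)) := by
    intro i hi
    refine measure_pos_of_measure_compl_lt_one ?_
    rw [← Set.preimage_compl, Set.compl_Ici]
    rcases (Finset.mem_Iic.1 hi).lt_or_eq with hiM | rfl
    · simp only [thr, if_pos hiM]
      exact h1 i
    · simpa only [thr, lt_irrefl, if_false] using hM
  refine (hindep.measure_biInter_preimage_inter_pos hmeas (fun _ => measurableSet_Ici) hthr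
    (.iInter fun k => .compl <| .biInter (Set.to_countable _) fun d _ =>
      measurableSet_biSup_comap_preimage (by simp only [Set.compl_Iic, Set.mem_Ioi]; omega)
        measurableSet_Iio) hC).trans_le (measure_mono ?_)
  rintro ω ⟨hωA, hωC⟩
  simp only [Set.mem_iInter, Set.mem_compl_iff, Set.mem_preimage, Set.mem_Ici, Set.mem_Iio,
    Finset.mem_Iic, Finset.mem_coe, Finset.mem_range, not_forall, not_lt, exists_prop] at hωA hωC
  simp only [hV, Set.mem_iInter, Set.mem_iUnion, Finset.mem_range, Set.mem_ofPred_eq,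
    exists_prop]
  exact fun n => exists_lt_sub_le_of_forall_window hustep
    (fun i hi => (if_pos hi).symm.trans_le (hωA i hi.le))
    (by simpa only [thr, lt_irrefl, if_false] using hωA M le_rfl) hωC

/-- **Heterogeneous Firework Process.** If for some integer `t ≥ 1` one has
`∑_{n=0}^∞ [P(R_n < t·m)]^t < ∞`, then `P(V) > 0`. -/
theorem firework_heterogeneous_survival_criterion_power
    {Ω : Type*} [MeasurableSpace Ω] (P : Measure Ω) [IsProbabilityMeasure P]
    (m : ℕ) (hm : 1 ≤ m)
    (u : ℕ → ℕ) (hu0 : u 0 = 0) (humono : StrictMono u)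
    (hustep : ∀ n, u (n + 1) - u n ≤ m)
    (R : ℕ → Ω → ℝ)
    (hmeas : ∀ i, Measurable (R i))
    (hnonneg : ∀ i ω, 0 ≤ R i ω)
    (hindep : iIndepFun R P)
    (h0 : ∀ n, 0 < P {ω | R n ω < (m : ℝ)})
    (h1 : ∀ n, P {ω | R n ω < (m : ℝ)} < 1)
    (V : Set Ω)
    (hV : V = ⋂ (n : ℕ) (_ : 1 ≤ n), ⋃ i ∈ Finset.range n,
      {ω | ((u n - u i : ℕ) : ℝ) ≤ R i ω})
    (ht : ∃ t : ℕ, 1 ≤ t ∧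
      (∑' n : ℕ, (P {ω | R n ω < ((t * m : ℕ) : ℝ)}) ^ t) ≠ ⊤) :
    0 < P V :=
  firework_heterogeneous_survival_criterion_power_general P m u hustep R hmeas hindep h1 V hV ht
end

section
/- For the heterogeneous Firework Process, P(V) ≥ ∏_{j=0}^{∞} [ 1 − ∏_{i=0}^{j} P(R_{j−i} < (i+1)m) ]. -/
open MeasureTheory ProbabilityTheory Filter
open scoped ENNReal

/-!
Vertex `u (n + 1)` fails to be covered by `u 0, …, u n` only if `R i < u (n + 1) - u i` for every
`i ≤ n`; since `u (n + 1) - u i ≤ (n + 1 - i) m`, independence bounds this probability by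
`∏_{i ≤ n} P(R (n - i) < (i + 1) m)`. The covering events are increasing functions of the
independent radii, so Harris's inequality bounds the probability that `u 1, …, u N` are all covered
from below by the product of the individual probabilities; continuity from above lets `N → ∞`.
Harris's inequality on a product of linearly ordered spaces follows by induction on the number of
factors from Chebyshev's integral inequality for monotone functions.
-/

theorem ENNReal.mul_add_mul_le_mul_add_mul {a b c d : ℝ≥0∞} (hab : a ≤ b) (hcd : c ≤ d) :
    a * d + b * c ≤ a * c + b * d := by
  obtain ⟨e, rfl⟩ := exists_add_of_le hcd
  calc a * (c + e) + b * c = a * c + (a * e + b * c) := by ring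
    _ ≤ a * c + (b * e + b * c) := by gcongr
    _ = a * c + b * (c + e) := by ring

theorem Monotone.mul_add_mul_le_mul_add_mul {α : Type*} [LinearOrder α] {f g : α → ℝ≥0∞}
    (hf : Monotone f) (hg : Monotone g) (x y : α) :
    f x * g y + f y * g x ≤ f x * g x + f y * g y := by
  rcases le_total x y with h | h
  · exact ENNReal.mul_add_mul_le_mul_add_mul (hf h) (hg h)
  · rw [add_comm (f x * g y), add_comm (f x * g x)]
    exact ENNReal.mul_add_mul_le_mul_add_mul (hf h) (hg h)

/-- **Chebyshev's integral inequality**. -/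
theorem lintegral_mul_lintegral_le_of_monotone {α : Type*} [MeasurableSpace α] [LinearOrder α]
    {μ : Measure α} [IsProbabilityMeasure μ] {f g : α → ℝ≥0∞} (hf : Measurable f)
    (hg : Measurable g) (hfm : Monotone f) (hgm : Monotone g) :
    (∫⁻ x, f x ∂μ) * ∫⁻ x, g x ∂μ ≤ ∫⁻ x, f x * g x ∂μ := by
  have symmetrized :
      2 * ((∫⁻ x, f x ∂μ) * ∫⁻ x, g x ∂μ) = ∫⁻ x, ∫⁻ y, f x * g y + f y * g x ∂μ ∂μ := by
    simp only [lintegral_add_left (hg.const_mul _), lintegral_const_mul _ hg,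
      lintegral_mul_const _ hf]
    rw [lintegral_add_left (hf.mul_const _), lintegral_mul_const _ hf, lintegral_const_mul _ hg]
    ring
  have diagonal : ∫⁻ x, ∫⁻ y, f x * g x + f y * g y ∂μ ∂μ = 2 * ∫⁻ x, f x * g x ∂μ := by
    simp only [lintegral_add_left measurable_const, lintegral_const, measure_univ, mul_one]
    rw [lintegral_add_right _ measurable_const, lintegral_const, measure_univ, mul_one, two_mul]
  refine (ENNReal.mul_le_mul_iff_right two_ne_zero ENNReal.ofNat_ne_top).mp ?_
  rw [symmetrized, ← diagonal]
  exact lintegral_mono fun x ↦ lintegral_mono fun y ↦ hfm.mul_add_mul_le_mul_add_mul hgm x y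

/-- The Harris–FKG property of a measure on a preorder. -/
def PositivelyCorrelated {α : Type*} [MeasurableSpace α] [Preorder α] (μ : Measure α) : Prop :=
  ∀ ⦃s t : Set α⦄, MeasurableSet s → MeasurableSet t → IsUpperSet s → IsUpperSet t →
    μ s * μ t ≤ μ (s ∩ t)

namespace PositivelyCorrelated

variable {α β : Type*} [MeasurableSpace α] [MeasurableSpace β]

theorem dirac [Preorder α] (a : α) : PositivelyCorrelated (Measure.dirac a) := by
  intro s t hs ht _ _
  rw [Measure.dirac_apply' a hs, Measure.dirac_apply' a ht, Measure.dirac_apply' a (hs.inter ht)]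
  by_cases has : a ∈ s <;> by_cases hat : a ∈ t <;> simp [has, hat]

theorem map [Preorder α] [Preorder β] {μ : Measure α} (hμ : PositivelyCorrelated μ) {f : α → β}
    (hf : Measurable f) (hfm : Monotone f) : PositivelyCorrelated (μ.map f) := by
  intro s t hs ht hsu htu
  rw [Measure.map_apply hf hs, Measure.map_apply hf ht, Measure.map_apply hf (hs.inter ht)]
  exact hμ (hf hs) (hf ht) (hsu.preimage hfm) (htu.preimage hfm)

/-- The sections `ν (Prod.mk x ⁻¹' s)` of two up-sets are monotone in `x`, so Chebyshev's
inequality in the first coordinate reduces the claim to the correlation of `ν`. -/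
theorem prod [LinearOrder α] [Preorder β] {μ : Measure α} [IsProbabilityMeasure μ] {ν : Measure β}
    [SFinite ν] (hν : PositivelyCorrelated ν) : PositivelyCorrelated (μ.prod ν) := by
  intro s t hs ht hsu htu
  have section_mono : ∀ {s : Set (α × β)}, IsUpperSet s →
      Monotone fun x ↦ ν (Prod.mk x ⁻¹' s) :=
    fun hsu x x' hx ↦ measure_mono fun y hy ↦ hsu (Prod.mk_le_mk.2 ⟨hx, le_rfl⟩) hy
  have section_upper : ∀ {s : Set (α × β)} (x : α), IsUpperSet s → IsUpperSet (Prod.mk x ⁻¹' s) :=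
    fun x hsu ↦ hsu.preimage (monotone_const.prodMk monotone_id)
  calc (μ.prod ν) s * (μ.prod ν) t
      = (∫⁻ x, ν (Prod.mk x ⁻¹' s) ∂μ) * ∫⁻ x, ν (Prod.mk x ⁻¹' t) ∂μ := by
        rw [Measure.prod_apply hs, Measure.prod_apply ht]
    _ ≤ ∫⁻ x, ν (Prod.mk x ⁻¹' s) * ν (Prod.mk x ⁻¹' t) ∂μ :=
        lintegral_mul_lintegral_le_of_monotone (measurable_measure_prodMk_left hs)
          (measurable_measure_prodMk_left ht) (section_mono hsu) (section_mono htu)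
    _ ≤ ∫⁻ x, ν (Prod.mk x ⁻¹' (s ∩ t)) ∂μ :=
        lintegral_mono fun x ↦ hν (measurable_prodMk_left hs) (measurable_prodMk_left ht)
          (section_upper x hsu) (section_upper x htu)
    _ = (μ.prod ν) (s ∩ t) := (Measure.prod_apply (hs.inter ht)).symm

theorem prod_measure_le_measure_biInter [Preorder α] {μ : Measure α} [IsProbabilityMeasure μ]
    (hμ : PositivelyCorrelated μ) {ι : Type*} {C : ι → Set α} (hCm : ∀ i, MeasurableSet (C i))
    (hCu : ∀ i, IsUpperSet (C i)) (s : Finset ι) :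
    ∏ i ∈ s, μ (C i) ≤ μ (⋂ i ∈ s, C i) := by
  classical
  induction s using Finset.induction_on with
  | empty => simp
  | insert i s hi ih =>
    rw [Finset.prod_insert hi, Finset.set_biInter_insert]
    calc μ (C i) * ∏ j ∈ s, μ (C j) ≤ μ (C i) * μ (⋂ j ∈ s, C j) := by gcongr
      _ ≤ μ (C i ∩ ⋂ j ∈ s, C j) :=
        hμ (hCm i) (Finset.measurableSet_biInter s fun j _ ↦ hCm j) (hCu i)
          (isUpperSet_iInter₂ fun j _ ↦ hCu j)

end PositivelyCorrelated

/-- **Harris's inequality** for a finite product of linearly ordered probability spaces. -/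
theorem positivelyCorrelated_pi : ∀ {n : ℕ} {α : Fin n → Type*} [∀ i, MeasurableSpace (α i)]
    [∀ i, LinearOrder (α i)] (μ : ∀ i, Measure (α i)) [∀ i, IsProbabilityMeasure (μ i)],
      PositivelyCorrelated (Measure.pi μ)
  | 0, _, _, _, μ, _ => by
    rw [Measure.pi_of_empty μ]
    exact .dirac _
  | _ + 1, α, _, _, μ, _ => by
    rw [← (measurePreserving_piFinSuccAbove μ 0).symm.map_eq]
    exact ((positivelyCorrelated_pi _).prod).map (MeasurableEquiv.measurable _)
      (Fin.insertNthOrderIso α 0).monotone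

theorem ProbabilityTheory.iIndepFun.positivelyCorrelated_map {Ω : Type*} [MeasurableSpace Ω]
    {P : Measure Ω} {n : ℕ} {α : Fin n → Type*} [∀ i, MeasurableSpace (α i)]
    [∀ i, LinearOrder (α i)] {X : ∀ i, Ω → α i} (hX : ∀ i, Measurable (X i))
    (hXi : iIndepFun X P) : PositivelyCorrelated (P.map fun ω i ↦ X i ω) := by
  have := hXi.isProbabilityMeasure
  rw [hXi.map_fun_eq_pi_map fun i ↦ (hX i).aemeasurable]
  have := fun i ↦ Measure.isProbabilityMeasure_map (μ := P) (hX i).aemeasurable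
  exact positivelyCorrelated_pi _

theorem le_add_mul_of_sub_succ_le {u : ℕ → ℕ} {m : ℕ} (hu : ∀ n, u (n + 1) - u n ≤ m)
    (i k : ℕ) : u (i + k) ≤ u i + k * m := by
  induction k with
  | zero => simp
  | succ k ih =>
    have := hu (i + k)
    rw [← add_assoc, add_one_mul]
    omega

section Firework

variable {Ω : Type*} [MeasurableSpace Ω] {P : Measure Ω} {m : ℕ} {u : ℕ → ℕ} {R : ℕ → Ω → ℝ}

/-- Vertex `u n` lies within the radius of one of `u 0, …, u (n - 1)`. The process survives iff
this holds for every `n ≥ 1`. -/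
def fireworkCovers (u : ℕ → ℕ) (R : ℕ → Ω → ℝ) (n : ℕ) : Set Ω :=
  ⋃ i ∈ Finset.range n, {ω | ((u n - u i : ℕ) : ℝ) ≤ R i ω}

theorem measurableSet_fireworkCovers (hR : ∀ i, Measurable (R i)) (n : ℕ) :
    MeasurableSet (fireworkCovers u R n) :=
  Finset.measurableSet_biUnion _ fun i _ ↦ measurableSet_le measurable_const (hR i)

theorem measure_compl_fireworkCovers_le (hu : ∀ n, u (n + 1) - u n ≤ m)
    (hRi : iIndepFun R P) (n : ℕ) :
    P (fireworkCovers u R (n + 1))ᶜ ≤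
      ∏ i ∈ Finset.range (n + 1), P {ω | R (n - i) ω < (((i + 1) * m : ℕ) : ℝ)} := by
  have hcompl : (fireworkCovers u R (n + 1))ᶜ =
      ⋂ i ∈ Finset.range (n + 1), R i ⁻¹' Set.Iio ((u (n + 1) - u i : ℕ) : ℝ) := by
    ext ω
    simp [fireworkCovers]
  have hgap : ∀ i ∈ Finset.range (n + 1), u (n + 1) - u i ≤ (n + 1 - i) * m := by
    intro i hi
    have := le_add_mul_of_sub_succ_le hu i (n + 1 - i)
    rw [Finset.mem_range] at hi
    rw [Nat.add_sub_cancel' hi.le] at this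
    omega
  calc P (fireworkCovers u R (n + 1))ᶜ
      = ∏ i ∈ Finset.range (n + 1), P (R i ⁻¹' Set.Iio ((u (n + 1) - u i : ℕ) : ℝ)) := by
        rw [hcompl, hRi.measure_inter_preimage_eq_mul _ fun _ _ ↦ measurableSet_Iio]
    _ ≤ ∏ i ∈ Finset.range (n + 1), P {ω | R i ω < (((n + 1 - i) * m : ℕ) : ℝ)} :=
        Finset.prod_le_prod' fun i hi ↦ measure_mono fun ω hω ↦
          show R i ω < _ from lt_of_lt_of_le hω (Nat.cast_le.2 (hgap i hi))
    _ = ∏ i ∈ Finset.range (n + 1), P {ω | R (n - i) ω < (((i + 1) * m : ℕ) : ℝ)} := by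
        rw [← Finset.prod_range_reflect]
        refine Finset.prod_congr rfl fun i hi ↦ ?_
        rw [Finset.mem_range] at hi
        rw [Nat.add_sub_cancel, show n + 1 - (n - i) = i + 1 by omega]

/-- The covering events depend monotonically on the radii, so Harris's inequality applies to the
law of `(R 0, …, R (N - 1))`. -/
theorem prod_measure_fireworkCovers_le (hR : ∀ i, Measurable (R i)) (hRi : iIndepFun R P)
    (N : ℕ) :
    ∏ n ∈ Finset.range N, P (fireworkCovers u R (n + 1)) ≤
      P (⋂ n ∈ Finset.range N, fireworkCovers u R (n + 1)) := by
  let X : Ω → Fin N → ℝ := fun ω i ↦ R i ω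
  let C : ℕ → Set (Fin N → ℝ) := fun n ↦
    ⋃ (i : Fin N) (_ : (i : ℕ) < n + 1), {x | ((u (n + 1) - u i : ℕ) : ℝ) ≤ x i}
  have hX : Measurable X := measurable_pi_lambda _ fun i ↦ hR i
  have hCm : ∀ n, MeasurableSet (C n) := fun n ↦
    .iUnion fun i ↦ .iUnion fun _ ↦ measurableSet_le measurable_const (measurable_pi_apply i)
  have hCu : ∀ n, IsUpperSet (C n) := fun n ↦
    isUpperSet_iUnion₂ fun i _ x y hxy hx ↦ le_trans hx (hxy i)
  have hcovers : ∀ n ∈ Finset.range N, fireworkCovers u R (n + 1) = X ⁻¹' C n := by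
    intro n hn
    ext ω
    simp only [fireworkCovers, C, X, Finset.mem_range] at hn ⊢
    simp only [Set.mem_iUnion, Set.mem_preimage]
    exact ⟨fun ⟨i, hi, h⟩ ↦ ⟨⟨i, by omega⟩, hi, h⟩, fun ⟨i, hi, h⟩ ↦ ⟨i, hi, h⟩⟩
  have hXi : iIndepFun (fun i : Fin N ↦ R i) P := hRi.precomp Fin.val_injective
  have := hRi.isProbabilityMeasure
  have := Measure.isProbabilityMeasure_map (μ := P) hX.aemeasurable
  calc ∏ n ∈ Finset.range N, P (fireworkCovers u R (n + 1))
      = ∏ n ∈ Finset.range N, P.map X (C n) :=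
        Finset.prod_congr rfl fun n hn ↦ by rw [hcovers n hn, Measure.map_apply hX (hCm n)]
    _ ≤ P.map X (⋂ n ∈ Finset.range N, C n) :=
        (hXi.positivelyCorrelated_map fun i ↦ hR i).prod_measure_le_measure_biInter hCm hCu _
    _ = P (⋂ n ∈ Finset.range N, fireworkCovers u R (n + 1)) := by
        rw [Measure.map_apply hX (Finset.measurableSet_biInter _ fun n _ ↦ hCm n),
          Set.preimage_iInter₂]
        exact congrArg P (Set.iInter₂_congr fun n hn ↦ (hcovers n hn).symm)

end Firework

theorem firework_heterogeneous_lower_bound_general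
    {Ω : Type*} [MeasurableSpace Ω] (P : Measure Ω) [IsProbabilityMeasure P]
    (m : ℕ)
    (u : ℕ → ℕ)
    (hustep : ∀ n, u (n + 1) - u n ≤ m)
    (R : ℕ → Ω → ℝ)
    (hmeas : ∀ i, Measurable (R i))
    (hindep : iIndepFun R P)
    (V : Set Ω)
    (hV : V = ⋂ (n : ℕ) (_ : 1 ≤ n), ⋃ i ∈ Finset.range n,
      {ω | ((u n - u i : ℕ) : ℝ) ≤ R i ω}) :
    P V ≥ ∏' j : ℕ, (1 - ∏ i ∈ Finset.range (j + 1),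
      P {ω | R (j - i) ω < (((i + 1) * m : ℕ) : ℝ)}) := by
  have hV : V = ⋂ n, fireworkCovers u R (n + 1) := hV.trans (Set.iInter_ge_eq_iInter_nat_add _ 1)
  have hcovers : ∀ n, 1 - ∏ i ∈ Finset.range (n + 1),
      P {ω | R (n - i) ω < (((i + 1) * m : ℕ) : ℝ)} ≤ P (fireworkCovers u R (n + 1)) := by
    intro n
    calc _ ≤ 1 - P (fireworkCovers u R (n + 1))ᶜ :=
          tsub_le_tsub_left (measure_compl_fireworkCovers_le hustep hindep n) 1
      _ = P (fireworkCovers u R (n + 1)) := by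
          rw [prob_compl_eq_one_sub (measurableSet_fireworkCovers hmeas _),
            ENNReal.sub_sub_cancel ENNReal.one_ne_top prob_le_one]
  rw [ge_iff_le, hV, measure_iInter_eq_iInf_measure_iInter_le
    (fun n ↦ (measurableSet_fireworkCovers hmeas _).nullMeasurableSet) ⟨0, measure_ne_top _ _⟩,
    ENNReal.tprod_eq_iInf_prod fun _ ↦ tsub_le_self]
  refine le_iInf fun N ↦ (iInf_le _ (Finset.range (N + 1))).trans ?_
  calc _ ≤ ∏ n ∈ Finset.range (N + 1), P (fireworkCovers u R (n + 1)) :=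
        Finset.prod_le_prod' fun n _ ↦ hcovers n
    _ ≤ P (⋂ n ∈ Finset.range (N + 1), fireworkCovers u R (n + 1)) :=
        prod_measure_fireworkCovers_le hmeas hindep _
    _ = P (⋂ n ≤ N, fireworkCovers u R (n + 1)) := by
        simp only [Finset.mem_range, Nat.lt_succ_iff]

/-- **Heterogeneous Firework Process.**
`P(V) ≥ ∏_{j=0}^∞ [1 − ∏_{i=0}^{j} P(R_{j-i} < (i+1)m)]`. -/
theorem firework_heterogeneous_lower_bound
    {Ω : Type*} [MeasurableSpace Ω] (P : Measure Ω) [IsProbabilityMeasure P]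
    (m : ℕ) (hm : 1 ≤ m)
    (u : ℕ → ℕ) (hu0 : u 0 = 0) (humono : StrictMono u)
    (hustep : ∀ n, u (n + 1) - u n ≤ m)
    (R : ℕ → Ω → ℝ)
    (hmeas : ∀ i, Measurable (R i))
    (hnonneg : ∀ i ω, 0 ≤ R i ω)
    (hindep : iIndepFun R P)
    (h0 : ∀ n, 0 < P {ω | R n ω < (m : ℝ)})
    (h1 : ∀ n, P {ω | R n ω < (m : ℝ)} < 1)
    (V : Set Ω)
    (hV : V = ⋂ (n : ℕ) (_ : 1 ≤ n), ⋃ i ∈ Finset.range n,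
      {ω | ((u n - u i : ℕ) : ℝ) ≤ R i ω}) :
    P V ≥ ∏' j : ℕ, (1 - ∏ i ∈ Finset.range (j + 1),
      P {ω | R (j - i) ω < (((i + 1) * m : ℕ) : ℝ)}) :=
  firework_heterogeneous_lower_bound_general P m u hustep R hmeas hindep V hV
end
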